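/- arXiv:2309.14357 — 3 statements merged into one kernel-verified Lean document; each statement's English description precedes it below -/
import Mathlib

section
/- Let A ∈ Mₙ(ℂ) with s_k(A) = s_{k+1}(A) (for 1 < k < n), and let q be the largest index with s_q(A) = s_k(A). Then the complex linear span of P(A), the set of matrices parallel to A with respect to the Ky-Fan k-norm, has dimension at least k² + 2k(q−k) + (n−k)². -/
open Matrix
open scoped ComplexOrder

/-- Singular values of a square matrix over ℝ or ℂ, in decreasing order:
`sv A i` is the `(i+1)`-st largest singular value. -/
noncomputable def sv {𝕜 : Type*} [RCLike 𝕜] {n : ℕ} (A : Matrix (Fin n) (Fin n) 𝕜)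
    (i : Fin n) : ℝ :=
  Real.sqrt (((Matrix.isHermitian_conjTranspose_mul_self A).eigenvalues ∘
    Tuple.sort ((Matrix.isHermitian_conjTranspose_mul_self A).eigenvalues)) i.rev)

/-- `svN A j` is `s_{j+1}(A)`, with junk value `0` out of range. -/
noncomputable def svN {𝕜 : Type*} [RCLike 𝕜] {n : ℕ} (A : Matrix (Fin n) (Fin n) 𝕜)
    (j : ℕ) : ℝ :=
  if h : j < n then sv A ⟨j, h⟩ else 0

/-- The Ky-Fan `k`-norm: sum of the `k` largest singular values. -/
noncomputable def kyFan {𝕜 : Type*} [RCLike 𝕜] {n : ℕ} (k : ℕ)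
    (A : Matrix (Fin n) (Fin n) 𝕜) : ℝ :=
  ∑ i ∈ Finset.univ.filter (fun i : Fin n => (i : ℕ) < k), sv A i

/-- Parallelism with respect to the Ky-Fan `k`-norm. -/
def KFParallel {𝕜 : Type*} [RCLike 𝕜] {n : ℕ} (k : ℕ)
    (A B : Matrix (Fin n) (Fin n) 𝕜) : Prop :=
  ∃ μ : 𝕜, ‖μ‖ = 1 ∧ kyFan k (A + μ • B) = kyFan k A + kyFan k B

/-- Block diagonal direct sum `X₁ ⊕ X₂`. -/
def bd {R : Type*} [Zero R] {k m : ℕ} (X₁ : Matrix (Fin k) (Fin k) R)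
    (X₂ : Matrix (Fin m) (Fin m) R) : Matrix (Fin (k + m)) (Fin (k + m)) R :=
  Matrix.reindex finSumFinEquiv finSumFinEquiv (Matrix.fromBlocks X₁ 0 0 X₂)

/-- The cone 𝒞 of block matrices `X₁ ⊕ X₂` with `X₁` psd and `s_k(X₁) ≥ s₁(X₂)`. -/
def CC (k m : ℕ) : Set (Matrix (Fin (k + m)) (Fin (k + m)) ℂ) :=
  {X | ∃ (X₁ : Matrix (Fin k) (Fin k) ℂ) (X₂ : Matrix (Fin m) (Fin m) ℂ), X = bd X₁ X₂ ∧ X₁.PosSemidef ∧ svN X₂ 0 ≤ svN X₁ (k - 1)}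

/-- The relative boundary of 𝒞: `X₁` psd with `s_k(X₁) = s₁(X₂)`. -/
def bC (k m : ℕ) : Set (Matrix (Fin (k + m)) (Fin (k + m)) ℂ) :=
  {X | ∃ (X₁ : Matrix (Fin k) (Fin k) ℂ) (X₂ : Matrix (Fin m) (Fin m) ℂ), X = bd X₁ X₂ ∧ X₁.PosSemidef ∧ svN X₂ 0 = svN X₁ (k - 1)}

/-- `Pert(X)`: elements `Z` of `∂𝒞` with `X ± tZ ∈ 𝒞` for all sufficiently small `t > 0`. -/
def Pert (k m : ℕ) (X : Matrix (Fin (k + m)) (Fin (k + m)) ℂ) :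
    Set (Matrix (Fin (k + m)) (Fin (k + m)) ℂ) :=
  {Z | Z ∈ bC k m ∧ ∃ ε : ℝ, 0 < ε ∧ ∀ t : ℝ, 0 < t → t ≤ ε →
    X + t • Z ∈ CC k m ∧ X - t • Z ∈ CC k m}


namespace KFAux

variable {n : ℕ}

/-- columns orthonormal on s can be completed to a unitary -/
lemma exists_unitary_ext (v : Fin n → (Fin n → ℂ)) (s : Finset (Fin n))
    (h : ∀ i ∈ s, ∀ j ∈ s, (star (v i)) ⬝ᵥ (v j) = if i = j then 1 else 0) :
    ∃ U : Matrix (Fin n) (Fin n) ℂ, star U * U = 1 ∧ U * star U = 1 ∧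
      ∀ i ∈ s, ∀ l, U l i = v i l := by
  classical
  set E := EuclideanSpace ℂ (Fin n)
  let v' : Fin n → E := fun i => (WithLp.equiv 2 (Fin n → ℂ)).symm (v i)
  have hon : Orthonormal ℂ ((s : Set (Fin n)).restrict v') := by
    rw [orthonormal_iff_ite]
    rintro ⟨i, hi⟩ ⟨j, hj⟩
    have := h i hi j hj
    show inner ℂ (v' i) (v' j) = _
    rw [EuclideanSpace.inner_eq_star_dotProduct, dotProduct_comm]
    -- inner (v' i) (v' j)
    have : (star ((WithLp.equiv 2 (Fin n → ℂ)) (v' i)) ⬝ᵥ (WithLp.equiv 2 (Fin n → ℂ)) (v' j))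
        = star (v i) ⬝ᵥ v j := rfl
    erw [this, h i hi j hj]
    simp [Subtype.ext_iff]
  obtain ⟨b, hb⟩ := hon.exists_orthonormalBasis_extension_of_card_eq
    (by simp [E])
  refine ⟨Matrix.of (fun l i => b i l), ?_, ?_, ?_⟩
  · ext i j
    have hinner := (orthonormal_iff_ite.mp b.orthonormal) i j
    rw [EuclideanSpace.inner_eq_star_dotProduct, dotProduct_comm] at hinner
    simp only [Matrix.mul_apply, Matrix.star_apply, Matrix.one_apply, Matrix.of_apply]
    simpa [dotProduct, Pi.star_apply] using hinner
  · rw [mul_eq_one_comm]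
    ext i j
    have hinner := (orthonormal_iff_ite.mp b.orthonormal) i j
    rw [EuclideanSpace.inner_eq_star_dotProduct, dotProduct_comm] at hinner
    simp only [Matrix.mul_apply, Matrix.star_apply, Matrix.one_apply, Matrix.of_apply]
    simpa [dotProduct, Pi.star_apply] using hinner
  · intro i hi l
    have := hb i hi
    simp only [Matrix.of_apply]
    rw [this]
    rfl


lemma sv_nonneg (A : Matrix (Fin n) (Fin n) ℂ) (i : Fin n) : 0 ≤ sv A i :=
  Real.sqrt_nonneg _

lemma sv_antitone (A : Matrix (Fin n) (Fin n) ℂ) : Antitone (sv A) := by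
  intro i j hij
  apply Real.sqrt_le_sqrt
  exact Tuple.monotone_sort _ (by simpa [Fin.rev_le_rev] using hij)

lemma sv_sq (A : Matrix (Fin n) (Fin n) ℂ) (i : Fin n) :
    sv A i ^ 2 = (Matrix.isHermitian_conjTranspose_mul_self A).eigenvalues
      (Tuple.sort ((Matrix.isHermitian_conjTranspose_mul_self A).eigenvalues) i.rev) := by
  have h0 := (Matrix.posSemidef_conjTranspose_mul_self A).eigenvalues_nonneg
    (Tuple.sort ((Matrix.isHermitian_conjTranspose_mul_self A).eigenvalues) i.rev)
  exact Real.sq_sqrt h0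

/-- entry formula -/
lemma mul_diag_mul_star_apply (M N : Matrix (Fin n) (Fin n) ℂ) (f : Fin n → ℂ) (a b : Fin n) :
    (M * diagonal f * star N) a b = ∑ j, M a j * f j * (starRingEnd ℂ) (N b j) := by
  rw [Matrix.mul_apply]
  apply Finset.sum_congr rfl
  intro j _
  rw [Matrix.mul_diagonal, Matrix.star_apply]
  rfl

lemma conj_diag_perm (W : Matrix (Fin n) (Fin n) ℂ) (ρ : Equiv.Perm (Fin n)) (g : Fin n → ℂ) :
    (W.submatrix id ⇑ρ) * diagonal (g ∘ ⇑ρ) * star (W.submatrix id ⇑ρ)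
      = W * diagonal g * star W := by
  ext a b
  rw [mul_diag_mul_star_apply, mul_diag_mul_star_apply]
  rw [← Equiv.sum_comp ρ (fun j => W a j * g j * (starRingEnd ℂ) (W b j))]
  simp [Matrix.submatrix_apply]

lemma unitary_submatrix_perm {W : Matrix (Fin n) (Fin n) ℂ} (hW : star W * W = 1)
    (ρ : Equiv.Perm (Fin n)) :
    star (W.submatrix id ⇑ρ) * (W.submatrix id ⇑ρ) = 1 ∧
      (W.submatrix id ⇑ρ) * star (W.submatrix id ⇑ρ) = 1 := by
  have h1 : star (W.submatrix id ⇑ρ) * (W.submatrix id ⇑ρ) = 1 := by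
    ext i j
    have := congrFun (congrFun hW (ρ i)) (ρ j)
    simp only [Matrix.mul_apply, Matrix.star_apply, Matrix.submatrix_apply, id_eq,
      Matrix.one_apply] at this ⊢
    rw [this]
    simp [EmbeddingLike.apply_eq_iff_eq]
  exact ⟨h1, mul_eq_one_comm.mp h1⟩

lemma exists_unitary_ext' : True := trivial


-- svd existence
lemma exists_svd (A : Matrix (Fin n) (Fin n) ℂ) :
    ∃ U V : Matrix (Fin n) (Fin n) ℂ,
      (star U * U = 1 ∧ U * star U = 1) ∧ (star V * V = 1 ∧ V * star V = 1) ∧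
      A = U * diagonal (fun i => (sv A i : ℂ)) * star V := by
  classical
  set hH := Matrix.isHermitian_conjTranspose_mul_self A with hHdef
  set μ : Fin n → ℝ := hH.eigenvalues with hμ
  set W : Matrix (Fin n) (Fin n) ℂ := (Matrix.IsHermitian.eigenvectorUnitary hH : Matrix (Fin n) (Fin n) ℂ) with hWdef
  have hW1 : star W * W = 1 := Matrix.UnitaryGroup.star_mul_self _
  have hspec : Aᴴ * A = W * diagonal (RCLike.ofReal ∘ μ) * star W := hH.spectral_theorem
  set ρ : Equiv.Perm (Fin n) := (Fin.revPerm).trans (Tuple.sort μ) with hρ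
  set V : Matrix (Fin n) (Fin n) ℂ := W.submatrix id ⇑ρ with hVdef
  obtain ⟨hV1, hV2⟩ := unitary_submatrix_perm hW1 ρ
  have hsvρ : ∀ i, sv A i ^ 2 = μ (ρ i) := by
    intro i
    have := sv_sq A i
    simpa [hρ] using this
  have hAA : Aᴴ * A = V * diagonal (fun i => ((sv A i : ℝ) ^ 2 : ℂ)) * star V := by
    have harg : (RCLike.ofReal ∘ μ) ∘ ⇑ρ = (fun i => ((sv A i : ℝ) ^ 2 : ℂ)) := by
      funext i
      rw [Function.comp_apply, Function.comp_apply, ← hsvρ i]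
      norm_cast
    rw [hspec, hVdef, ← conj_diag_perm W ρ (RCLike.ofReal ∘ μ), harg]
  set B := A * V with hBdef
  have hBB : star B * B = diagonal (fun i => ((sv A i : ℝ) ^ 2 : ℂ)) := by
    have h1 : star B * B = star V * (Aᴴ * A) * V := by
      rw [hBdef, Matrix.star_mul]
      rw [Matrix.star_eq_conjTranspose]
      noncomm_ring
    rw [h1, hAA]
    calc star V * (V * diagonal (fun i => ((sv A i : ℝ) ^ 2 : ℂ)) * star V) * V
        = (star V * V) * diagonal (fun i => ((sv A i : ℝ) ^ 2 : ℂ)) * (star V * V) := by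
          noncomm_ring
      _ = diagonal (fun i => ((sv A i : ℝ) ^ 2 : ℂ)) := by rw [hV1]; simp
  set d : Fin n → ℝ := sv A with hd
  have hBcol : ∀ i j : Fin n, (∑ l, (starRingEnd ℂ) (B l i) * B l j)
      = if i = j then ((d i : ℝ)^2 : ℂ) else 0 := by
    intro i j
    have h2 := congrFun (congrFun hBB i) j
    simp only [Matrix.mul_apply, Matrix.star_apply, Matrix.diagonal_apply, RCLike.star_def] at h2
    convert h2 using 2
  have hcol0 : ∀ j, d j = 0 → ∀ l, B l j = 0 := by
    intro j hdj l
    have h2 := hBcol j j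
    rw [if_pos rfl, hdj] at h2
    norm_num at h2
    have h3 : ∑ t, (Complex.normSq (B t j) : ℂ) = 0 := by
      rw [← h2]
      apply Finset.sum_congr rfl
      intro t _
      rw [mul_comm, Complex.mul_conj]
    have hsum : ∑ t, Complex.normSq (B t j) = 0 := by
      have := h3
      rw [← Complex.ofReal_sum] at this
      exact_mod_cast this
    have := (Finset.sum_eq_zero_iff_of_nonneg (fun t _ => Complex.normSq_nonneg (B t j))).mp hsum l (Finset.mem_univ l)
    exact Complex.normSq_eq_zero.mp this
  set s : Finset (Fin n) := Finset.univ.filter (fun i => d i ≠ 0) with hs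
  set v : Fin n → (Fin n → ℂ) := fun i l => ((d i)⁻¹ : ℝ) * B l i with hv
  have hon : ∀ i ∈ s, ∀ j ∈ s, (star (v i)) ⬝ᵥ (v j) = if i = j then 1 else 0 := by
    intro i hi j hj
    simp only [hs, Finset.mem_filter] at hi hj
    have h2 := hBcol i j
    simp only [dotProduct, Pi.star_apply, hv, RCLike.star_def]
    have hterm : ∀ l, (starRingEnd ℂ) ((((d i)⁻¹ : ℝ) : ℂ) * B l i) * ((((d j)⁻¹ : ℝ) : ℂ) * B l j)
        = (((d i)⁻¹ : ℝ) : ℂ) * (((d j)⁻¹ : ℝ) : ℂ) * ((starRingEnd ℂ) (B l i) * B l j) := by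
      intro l
      rw [_root_.map_mul, Complex.conj_ofReal]
      ring
    simp only [hterm]
    rw [← Finset.mul_sum, h2]
    split_ifs with hij
    · subst hij
      rw [← Complex.ofReal_pow, ← Complex.ofReal_mul, ← Complex.ofReal_mul, ← Complex.ofReal_one]
      congr 1
      rw [pow_two]
      rw [show (d i)⁻¹ * (d i)⁻¹ * (d i * d i) = ((d i)⁻¹ * d i) * ((d i)⁻¹ * d i) by ring]
      rw [inv_mul_cancel₀ hi.2]
      ring
    · simp
  obtain ⟨U, hU1, hU2, hUcol⟩ := exists_unitary_ext v s hon
  refine ⟨U, V, ⟨hU1, hU2⟩, ⟨hV1, hV2⟩, ?_⟩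
  have hBU : B = U * diagonal (fun i => (d i : ℂ)) := by
    ext l j
    rw [Matrix.mul_diagonal]
    by_cases hdj : d j = 0
    · rw [hcol0 j hdj l, hdj]
      simp
    · have hjs : j ∈ s := by simp [hs, hdj]
      rw [hUcol j hjs l]
      simp only [hv]
      rw [mul_comm, ← mul_assoc, ← Complex.ofReal_mul, mul_inv_cancel₀ hdj]
      simp
  have hAB : A = B * star V := by
    rw [hBdef, Matrix.mul_assoc, hV2, Matrix.mul_one]
  rw [hAB, hBU, Matrix.mul_assoc]

lemma card_filter_Ico {a b : ℕ} (hb : b ≤ n) :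
    (Finset.univ.filter (fun i : Fin n => a ≤ (i : ℕ) ∧ (i : ℕ) < b)).card = b - a := by
  classical
  rw [← Nat.card_Ico a b]
  apply Finset.card_bij (fun (i : Fin n) _ => (i : ℕ))
  · intro i hi
    simp only [Finset.mem_filter] at hi
    simp only [Finset.mem_Ico]
    exact hi.2
  · intro i hi j hj hij
    exact Fin.ext hij
  · intro x hx
    simp only [Finset.mem_Ico] at hx
    exact ⟨⟨x, lt_of_lt_of_le hx.2 hb⟩, by simp [hx.1, hx.2], rfl⟩

lemma card_filter_lt {b : ℕ} (hb : b ≤ n) :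
    (Finset.univ.filter (fun i : Fin n => (i : ℕ) < b)).card = b := by
  classical
  have h := card_filter_Ico (a := 0) hb
  have he : (Finset.univ.filter (fun i : Fin n => 0 ≤ (i : ℕ) ∧ (i : ℕ) < b))
      = (Finset.univ.filter (fun i : Fin n => (i : ℕ) < b)) := by
    ext i; simp
  rw [he] at h
  simpa using h

lemma star_mul_diag_mul_apply (P Q : Matrix (Fin n) (Fin n) ℂ) (f : Fin n → ℂ) (i j : Fin n) :
    (star P * diagonal f * Q) i j = ∑ l, (starRingEnd ℂ) (P l i) * f l * Q l j := by
  rw [Matrix.mul_apply]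
  apply Finset.sum_congr rfl
  intro l _
  rw [Matrix.mul_diagonal, Matrix.star_apply]
  rfl

lemma row_normSq {P : Matrix (Fin n) (Fin n) ℂ} (hP2 : P * star P = 1) (j : Fin n) :
    ∑ i, Complex.normSq (P j i) = 1 := by
  have h := congrFun (congrFun hP2 j) j
  rw [Matrix.mul_apply, Matrix.one_apply_eq] at h
  have h2 : ∑ i, (Complex.normSq (P j i) : ℂ) = 1 := by
    rw [← h]
    apply Finset.sum_congr rfl
    intro i _
    rw [Matrix.star_apply, RCLike.star_def, Complex.mul_conj]
  rw [← Complex.ofReal_sum] at h2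
  exact_mod_cast h2

lemma col_normSq {P : Matrix (Fin n) (Fin n) ℂ} (hP1 : star P * P = 1) (i : Fin n) :
    ∑ j, Complex.normSq (P j i) = 1 := by
  have h := congrFun (congrFun hP1 i) i
  rw [Matrix.mul_apply, Matrix.one_apply_eq] at h
  have h2 : ∑ j, (Complex.normSq (P j i) : ℂ) = 1 := by
    rw [← h]
    apply Finset.sum_congr rfl
    intro j _
    rw [Matrix.star_apply, RCLike.star_def, mul_comm, Complex.mul_conj]
  rw [← Complex.ofReal_sum] at h2
  exact_mod_cast h2

lemma core {k : ℕ} (hk1 : 1 ≤ k) (hkn : k ≤ n) (s : Fin n → ℝ) (hs : Antitone s)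
    (h0 : ∀ i, 0 ≤ s i) {P Q : Matrix (Fin n) (Fin n) ℂ}
    (hP1 : star P * P = 1) (hP2 : P * star P = 1)
    (hQ1 : star Q * Q = 1) (hQ2 : Q * star Q = 1) :
    ∑ i ∈ Finset.univ.filter (fun i : Fin n => (i : ℕ) < k),
        ((star P * diagonal (fun j => (s j : ℂ)) * Q) i i).re ≤
      ∑ i ∈ Finset.univ.filter (fun i : Fin n => (i : ℕ) < k), s i := by
  classical
  set F := Finset.univ.filter (fun i : Fin n => (i : ℕ) < k) with hF
  have hcard : F.card = k := card_filter_lt hkn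
  set α : Fin n → ℝ :=
    fun j => ∑ i ∈ F, (Complex.normSq (P j i) + Complex.normSq (Q j i)) / 2 with hα
  have hα0 : ∀ j, 0 ≤ α j := by
    intro j
    apply Finset.sum_nonneg
    intro i _
    have := Complex.normSq_nonneg (P j i)
    have := Complex.normSq_nonneg (Q j i)
    linarith
  have hα1 : ∀ j, α j ≤ 1 := by
    intro j
    have h1 : ∑ i ∈ F, Complex.normSq (P j i) ≤ 1 := by
      rw [← row_normSq hP2 j]
      apply Finset.sum_le_sum_of_subset_of_nonneg (Finset.subset_univ F)
      intro i _ _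
      exact Complex.normSq_nonneg _
    have h2 : ∑ i ∈ F, Complex.normSq (Q j i) ≤ 1 := by
      rw [← row_normSq hQ2 j]
      apply Finset.sum_le_sum_of_subset_of_nonneg (Finset.subset_univ F)
      intro i _ _
      exact Complex.normSq_nonneg _
    have : α j = ((∑ i ∈ F, Complex.normSq (P j i)) + (∑ i ∈ F, Complex.normSq (Q j i))) / 2 := by
      rw [hα, ← Finset.sum_add_distrib, Finset.sum_div]
    rw [this]
    linarith
  have hαsum : ∑ j, α j = k := by
    rw [hα, Finset.sum_comm]
    have : ∀ i ∈ F, ∑ j, (Complex.normSq (P j i) + Complex.normSq (Q j i)) / 2 = 1 := by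
      intro i _
      rw [← Finset.sum_div, Finset.sum_add_distrib, col_normSq hP1 i, col_normSq hQ1 i]
      norm_num
    rw [Finset.sum_congr rfl this, Finset.sum_const, hcard, nsmul_eq_mul, mul_one]
  -- rewrite LHS
  have hLHS : ∑ i ∈ F, ((star P * diagonal (fun j => (s j : ℂ)) * Q) i i).re
      = ∑ j, ∑ i ∈ F, s j * ((starRingEnd ℂ) (P j i) * Q j i).re := by
    rw [← Finset.sum_comm]
    apply Finset.sum_congr rfl
    intro i _
    rw [star_mul_diag_mul_apply, Complex.re_sum]
    apply Finset.sum_congr rfl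
    intro j _
    rw [show (starRingEnd ℂ) (P j i) * (s j : ℂ) * Q j i
        = (s j : ℂ) * ((starRingEnd ℂ) (P j i) * Q j i) by ring]
    rw [Complex.re_ofReal_mul]
  rw [hLHS]
  have hstep1 : ∀ j, ∑ i ∈ F, s j * ((starRingEnd ℂ) (P j i) * Q j i).re ≤ s j * α j := by
    intro j
    rw [← Finset.mul_sum, hα]
    apply mul_le_mul_of_nonneg_left _ (h0 j)
    apply Finset.sum_le_sum
    intro i _
    have h1 : ((starRingEnd ℂ) (P j i) * Q j i).re ≤ ‖(starRingEnd ℂ) (P j i) * Q j i‖ :=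
      Complex.re_le_norm _
    have h2 : ‖(starRingEnd ℂ) (P j i) * Q j i‖
        = ‖P j i‖ * ‖Q j i‖ := by
      rw [norm_mul, Complex.norm_conj]
    have h3 : ‖P j i‖ * ‖Q j i‖
        ≤ (Complex.normSq (P j i) + Complex.normSq (Q j i)) / 2 := by
      rw [← Complex.sq_norm, ← Complex.sq_norm]
      nlinarith [norm_nonneg (P j i), norm_nonneg (Q j i),
        sq_nonneg (‖P j i‖ - ‖Q j i‖)]
    linarith
  have hstep2 : ∑ j, ∑ i ∈ F, s j * ((starRingEnd ℂ) (P j i) * Q j i).re ≤ ∑ j, s j * α j :=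
    Finset.sum_le_sum (fun j _ => hstep1 j)
  have hk1n : k - 1 < n := lt_of_lt_of_le (Nat.sub_lt hk1 one_pos) hkn
  set t := s ⟨k - 1, hk1n⟩ with ht
  have key : ∀ j : Fin n, s j * α j
      ≤ (if (j : ℕ) < k then s j else 0) + t * (α j - (if (j : ℕ) < k then 1 else 0)) := by
    intro j
    by_cases hj : (j : ℕ) < k
    · rw [if_pos hj, if_pos hj]
      have hts : t ≤ s j := by
        apply hs
        rw [Fin.le_def]
        simp only []
        omega
      have hα1j := hα1 j
      nlinarith
    · rw [if_neg hj, if_neg hj]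
      have hts : s j ≤ t := by
        apply hs
        rw [Fin.le_def]
        simp only []
        omega
      have := hα0 j
      nlinarith
  have hstep3 : ∑ j, s j * α j ≤ ∑ j ∈ F, s j := by
    calc ∑ j, s j * α j
        ≤ ∑ j : Fin n, ((if (j : ℕ) < k then s j else 0)
            + t * (α j - (if (j : ℕ) < k then 1 else 0))) :=
          Finset.sum_le_sum (fun j _ => key j)
      _ = (∑ j ∈ F, s j) + t * ((∑ j, α j) - F.card) := by
          rw [Finset.sum_add_distrib]
          congr 1
          · rw [← Finset.sum_filter]
          · rw [← Finset.mul_sum]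
            congr 1
            rw [Finset.sum_sub_distrib]
            congr 1
            rw [← Finset.sum_filter, Finset.sum_const, nsmul_eq_mul, mul_one]
      _ = ∑ j ∈ F, s j := by
          rw [hαsum, hcard]
          ring
  linarith

lemma unitary_mul {U V : Matrix (Fin n) (Fin n) ℂ}
    (hU1 : star U * U = 1) (hU2 : U * star U = 1)
    (hV1 : star V * V = 1) (hV2 : V * star V = 1) :
    star (U * V) * (U * V) = 1 ∧ (U * V) * star (U * V) = 1 := by
  constructor
  · calc star (U * V) * (U * V) = star V * (star U * U) * V := by
          rw [Matrix.star_mul]; noncomm_ring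
      _ = 1 := by rw [hU1, Matrix.mul_one, hV1]
  · calc (U * V) * star (U * V) = U * (V * star V) * star U := by
          rw [Matrix.star_mul]; noncomm_ring
      _ = 1 := by rw [hV2, Matrix.mul_one, hU2]

lemma unitary_star {U : Matrix (Fin n) (Fin n) ℂ}
    (hU1 : star U * U = 1) (hU2 : U * star U = 1) :
    star (star U) * (star U) = 1 ∧ (star U) * star (star U) = 1 := by
  rw [star_star]
  exact ⟨hU2, hU1⟩

lemma KF1 {k : ℕ} (hk1 : 1 ≤ k) (hkn : k ≤ n) (M U W : Matrix (Fin n) (Fin n) ℂ)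
    (hU1 : star U * U = 1) (hU2 : U * star U = 1)
    (hW1 : star W * W = 1) (hW2 : W * star W = 1) :
    ∑ i ∈ Finset.univ.filter (fun i : Fin n => (i : ℕ) < k),
      ((star U * M * W) i i).re ≤ kyFan k M := by
  obtain ⟨U₀, W₀, ⟨hU₀1, hU₀2⟩, ⟨hW₀1, hW₀2⟩, hM⟩ := exists_svd M
  obtain ⟨hP1, hP2⟩ := unitary_mul (unitary_star hU₀1 hU₀2).1 (unitary_star hU₀1 hU₀2).2 hU1 hU2
  obtain ⟨hQ1, hQ2⟩ := unitary_mul (unitary_star hW₀1 hW₀2).1 (unitary_star hW₀1 hW₀2).2 hW1 hW2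
  have hrw : star U * M * W
      = star (star U₀ * U) * diagonal (fun i => (sv M i : ℂ)) * (star W₀ * W) := by
    conv_lhs => rw [hM]
    rw [Matrix.star_mul, star_star]
    noncomm_ring
  rw [hrw]
  exact core hk1 hkn (sv M) (sv_antitone M) (sv_nonneg M) hP1 hP2 hQ1 hQ2

lemma KF2 (k : ℕ) (M : Matrix (Fin n) (Fin n) ℂ) :
    ∃ U W : Matrix (Fin n) (Fin n) ℂ,
      (star U * U = 1 ∧ U * star U = 1) ∧ (star W * W = 1 ∧ W * star W = 1) ∧
      ∑ i ∈ Finset.univ.filter (fun i : Fin n => (i : ℕ) < k),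
        ((star U * M * W) i i).re = kyFan k M := by
  obtain ⟨U₀, W₀, ⟨hU₀1, hU₀2⟩, ⟨hW₀1, hW₀2⟩, hM⟩ := exists_svd M
  refine ⟨U₀, W₀, ⟨hU₀1, hU₀2⟩, ⟨hW₀1, hW₀2⟩, ?_⟩
  have hrw : star U₀ * M * W₀ = diagonal (fun i => (sv M i : ℂ)) := by
    conv_lhs => rw [hM]
    calc star U₀ * (U₀ * diagonal (fun i => (sv M i : ℂ)) * star W₀) * W₀
        = (star U₀ * U₀) * diagonal (fun i => (sv M i : ℂ)) * (star W₀ * W₀) := by noncomm_ring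
      _ = diagonal (fun i => (sv M i : ℂ)) := by rw [hU₀1, hW₀1]; simp
  rw [hrw]
  apply Finset.sum_congr rfl
  intro i _
  rw [Matrix.diagonal_apply_eq, Complex.ofReal_re]

lemma kyFan_subadd {k : ℕ} (hk1 : 1 ≤ k) (hkn : k ≤ n) (M N : Matrix (Fin n) (Fin n) ℂ) :
    kyFan k (M + N) ≤ kyFan k M + kyFan k N := by
  obtain ⟨U, W, ⟨hU1, hU2⟩, ⟨hW1, hW2⟩, heq⟩ := KF2 k (M + N)
  rw [← heq]
  have hrw : star U * (M + N) * W = star U * M * W + star U * N * W := by noncomm_ring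
  rw [hrw]
  simp only [Matrix.add_apply, Complex.add_re, Finset.sum_add_distrib]
  exact add_le_add (KF1 hk1 hkn M U W hU1 hU2 hW1 hW2) (KF1 hk1 hkn N U W hU1 hU2 hW1 hW2)

lemma kyFan_unitary {k : ℕ} (hk1 : 1 ≤ k) (hkn : k ≤ n) (C U V : Matrix (Fin n) (Fin n) ℂ)
    (hU1 : star U * U = 1) (hU2 : U * star U = 1)
    (hV1 : star V * V = 1) (hV2 : V * star V = 1) :
    kyFan k (U * C * star V) = kyFan k C := by
  apply le_antisymm
  · obtain ⟨U₁, W₁, ⟨hA1, hA2⟩, ⟨hB1, hB2⟩, heq⟩ := KF2 k (U * C * star V)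
    rw [← heq]
    have hrw : star U₁ * (U * C * star V) * W₁
        = star (star U * U₁) * C * (star V * W₁) := by
      rw [Matrix.star_mul, star_star]
      noncomm_ring
    rw [hrw]
    obtain ⟨hP1, hP2⟩ := unitary_mul (unitary_star hU1 hU2).1 (unitary_star hU1 hU2).2 hA1 hA2
    obtain ⟨hQ1, hQ2⟩ := unitary_mul (unitary_star hV1 hV2).1 (unitary_star hV1 hV2).2 hB1 hB2
    exact KF1 hk1 hkn C _ _ hP1 hP2 hQ1 hQ2
  · obtain ⟨U₁, W₁, ⟨hA1, hA2⟩, ⟨hB1, hB2⟩, heq⟩ := KF2 k C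
    rw [← heq]
    have hrw : star U₁ * C * W₁
        = star (U * U₁) * (U * C * star V) * (V * W₁) := by
      rw [Matrix.star_mul]
      calc star U₁ * C * W₁ = star U₁ * (1 * (C * (1 * W₁))) := by noncomm_ring
        _ = star U₁ * ((star U * U) * (C * ((star V * V) * W₁))) := by rw [hU1, hV1]
        _ = star U₁ * star U * (U * C * star V) * (V * W₁) := by noncomm_ring
    rw [hrw]
    obtain ⟨hP1, hP2⟩ := unitary_mul hU1 hU2 hA1 hA2
    obtain ⟨hQ1, hQ2⟩ := unitary_mul hV1 hV2 hB1 hB2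
    exact KF1 hk1 hkn (U * C * star V) _ _ hP1 hP2 hQ1 hQ2

lemma kyFan_diag {k : ℕ} (hk1 : 1 ≤ k) (hkn : k ≤ n) (s : Fin n → ℝ)
    (hs : Antitone s) (h0 : ∀ i, 0 ≤ s i) :
    kyFan k (diagonal (fun i => (s i : ℂ)))
      = ∑ i ∈ Finset.univ.filter (fun i : Fin n => (i : ℕ) < k), s i := by
  apply le_antisymm
  · obtain ⟨U, W, ⟨hU1, hU2⟩, ⟨hW1, hW2⟩, heq⟩ := KF2 k (diagonal (fun i => (s i : ℂ)))
    rw [← heq]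
    exact core hk1 hkn s hs h0 hU1 hU2 hW1 hW2
  · have h := KF1 hk1 hkn (diagonal (fun i => (s i : ℂ))) 1 1
      (by simp) (by simp) (by simp) (by simp)
    simp only [star_one, Matrix.one_mul, Matrix.mul_one] at h
    refine le_trans (le_of_eq ?_) h
    apply Finset.sum_congr rfl
    intro i _
    rw [Matrix.diagonal_apply_eq, Complex.ofReal_re]

lemma star_mul_vmv_mul_apply (U W : Matrix (Fin n) (Fin n) ℂ) (v w : Fin n → ℂ) (i j : Fin n) :
    (star U * vecMulVec v (star w) * W) i j
      = (∑ l, (starRingEnd ℂ) (U l i) * v l) * (∑ t, (starRingEnd ℂ) (w t) * W t j) := by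
  rw [Matrix.mul_apply]
  have h1 : ∀ t, (star U * vecMulVec v (star w)) i t
      = (∑ l, (starRingEnd ℂ) (U l i) * v l) * ((starRingEnd ℂ) (w t)) := by
    intro t
    rw [Matrix.mul_apply, Finset.sum_mul]
    apply Finset.sum_congr rfl
    intro l _
    rw [Matrix.star_apply, Matrix.vecMulVec_apply, Pi.star_apply, RCLike.star_def]
    ring
  simp only [h1]
  rw [Finset.mul_sum]
  apply Finset.sum_congr rfl
  intro t _
  ring

lemma sum_normSq_eqC (w : Fin n → ℂ) :
    ((∑ i, Complex.normSq (w i) : ℝ) : ℂ) = star w ⬝ᵥ w := by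
  rw [Complex.ofReal_sum]
  simp only [dotProduct, Pi.star_apply, RCLike.star_def]
  apply Finset.sum_congr rfl
  intro i _
  rw [mul_comm, Complex.mul_conj]

lemma sum_normSq_mulVec {U₁ : Matrix (Fin n) (Fin n) ℂ} (hU2 : U₁ * star U₁ = 1)
    (v : Fin n → ℂ) :
    ∑ i, Complex.normSq ((star U₁ *ᵥ v) i) = ∑ l, Complex.normSq (v l) := by
  have h : ((∑ i, Complex.normSq ((star U₁ *ᵥ v) i) : ℝ) : ℂ)
      = ((∑ l, Complex.normSq (v l) : ℝ) : ℂ) := by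
    rw [sum_normSq_eqC, sum_normSq_eqC, Matrix.star_mulVec]
    rw [show (star U₁)ᴴ = U₁ by rw [← Matrix.star_eq_conjTranspose]; exact star_star U₁]
    rw [← dotProduct_mulVec, Matrix.mulVec_mulVec, hU2, Matrix.one_mulVec]
  exact_mod_cast h

lemma col_sum_eq {U₁ : Matrix (Fin n) (Fin n) ℂ} (v : Fin n → ℂ) (i : Fin n) :
    (∑ l, (starRingEnd ℂ) (U₁ l i) * v l) = (star U₁ *ᵥ v) i := by
  rw [Matrix.mulVec]
  simp only [dotProduct, Matrix.star_apply, RCLike.star_def]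

lemma sum_normSq_cols_le {U₁ : Matrix (Fin n) (Fin n) ℂ} (hU2 : U₁ * star U₁ = 1)
    (v : Fin n → ℂ) (F : Finset (Fin n)) :
    ∑ i ∈ F, Complex.normSq (∑ l, (starRingEnd ℂ) (U₁ l i) * v l)
      ≤ ∑ l, Complex.normSq (v l) := by
  rw [← sum_normSq_mulVec hU2 v]
  have he : ∀ i ∈ F, Complex.normSq (∑ l, (starRingEnd ℂ) (U₁ l i) * v l)
      = Complex.normSq ((star U₁ *ᵥ v) i) := by
    intro i _
    rw [col_sum_eq]
  rw [Finset.sum_congr rfl he]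
  apply Finset.sum_le_sum_of_subset_of_nonneg (Finset.subset_univ F)
  intro i _ _
  exact Complex.normSq_nonneg _

lemma conj_mul_self (z : ℂ) : (starRingEnd ℂ) z * z = ((Complex.normSq z : ℝ) : ℂ) := by
  rw [mul_comm, Complex.mul_conj]

/-- `kyFan` of a rank-one `v vᴴ` equals `∑ normSq v`. -/
lemma kyFan_vmv {k : ℕ} (hk1 : 1 ≤ k) (hkn : k ≤ n) (v : Fin n → ℂ) :
    kyFan k (vecMulVec v (star v)) = ∑ l, Complex.normSq (v l) := by
  classical
  set C := vecMulVec v (star v) with hC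
  set N := ∑ l, Complex.normSq (v l) with hN
  set F := Finset.univ.filter (fun i : Fin n => (i : ℕ) < k) with hF
  have hNnn : 0 ≤ N := Finset.sum_nonneg (fun l _ => Complex.normSq_nonneg _)
  apply le_antisymm
  · obtain ⟨U₁, W₁, ⟨hU1, hU2⟩, ⟨hW1, hW2⟩, heq⟩ := KF2 k C
    rw [← heq]
    have hterm : ∀ i ∈ F, ((star U₁ * C * W₁) i i).re
        ≤ (Complex.normSq (∑ l, (starRingEnd ℂ) (U₁ l i) * v l)
          + Complex.normSq (∑ l, (starRingEnd ℂ) (W₁ l i) * v l)) / 2 := by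
      intro i _
      rw [hC, star_mul_vmv_mul_apply]
      set a := ∑ l, (starRingEnd ℂ) (U₁ l i) * v l with hadef
      set b' := ∑ l, (starRingEnd ℂ) (W₁ l i) * v l with hbdef
      have hb : (∑ t, (starRingEnd ℂ) (v t) * W₁ t i) = (starRingEnd ℂ) b' := by
        rw [hbdef, map_sum]
        apply Finset.sum_congr rfl
        intro l _
        rw [_root_.map_mul, Complex.conj_conj]
        ring
      rw [hb]
      have h1 : (a * (starRingEnd ℂ) b').re ≤ ‖a‖ * ‖b'‖ := by
        refine le_trans (Complex.re_le_norm _) ?_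
        rw [norm_mul, Complex.norm_conj]
      have h2 : ‖a‖ * ‖b'‖ ≤ (Complex.normSq a + Complex.normSq b') / 2 := by
        rw [← Complex.sq_norm, ← Complex.sq_norm]
        nlinarith [norm_nonneg a, norm_nonneg b', sq_nonneg (‖a‖ - ‖b'‖)]
      linarith
    refine le_trans (Finset.sum_le_sum hterm) ?_
    rw [← Finset.sum_div, Finset.sum_add_distrib]
    have hA := sum_normSq_cols_le hU2 v F
    have hB := sum_normSq_cols_le hW2 v F
    linarith
  · -- lower bound
    by_cases hN0 : N = 0
    · rw [hN0]
      have h := KF1 hk1 hkn C 1 1 (by simp) (by simp) (by simp) (by simp)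
      simp only [star_one, Matrix.one_mul, Matrix.mul_one] at h
      refine le_trans ?_ h
      apply Finset.sum_nonneg
      intro i _
      rw [hC, Matrix.vecMulVec_apply, Pi.star_apply, RCLike.star_def, Complex.mul_conj,
        Complex.ofReal_re]
      exact Complex.normSq_nonneg _
    · have hNpos : 0 < N := lt_of_le_of_ne hNnn (Ne.symm hN0)
      set c : ℝ := (Real.sqrt N)⁻¹ with hc
      set g : Fin n → (Fin n → ℂ) := fun _ l => (c : ℂ) * v l with hg
      have hsqrtN : Real.sqrt N ^ 2 = N := Real.sq_sqrt hNnn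
      have hsqrtpos : 0 < Real.sqrt N := Real.sqrt_pos.mpr hNpos
      have horth : ∀ i ∈ ({(⟨0, by omega⟩ : Fin n)} : Finset (Fin n)),
          ∀ j ∈ ({(⟨0, by omega⟩ : Fin n)} : Finset (Fin n)),
          (star (g i)) ⬝ᵥ (g j) = if i = j then 1 else 0 := by
        intro i hi j hj
        simp only [Finset.mem_singleton] at hi hj
        subst hi; subst hj
        rw [if_pos rfl]
        simp only [dotProduct, Pi.star_apply, RCLike.star_def, hg]
        have hterm : ∀ l, (starRingEnd ℂ) ((c : ℂ) * v l) * ((c : ℂ) * v l)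
            = (c : ℂ) * (c : ℂ) * ((Complex.normSq (v l) : ℝ) : ℂ) := by
          intro l
          rw [_root_.map_mul, Complex.conj_ofReal]
          rw [show (c : ℂ) * (starRingEnd ℂ) (v l) * ((c : ℂ) * v l)
              = (c : ℂ) * (c : ℂ) * ((starRingEnd ℂ) (v l) * v l) by ring]
          rw [conj_mul_self]
        simp only [hterm]
        rw [← Finset.mul_sum, ← Complex.ofReal_sum, ← hN, ← Complex.ofReal_mul,
          ← Complex.ofReal_mul]
        rw [show c * c * N = (Real.sqrt N)⁻¹ * (Real.sqrt N)⁻¹ * (Real.sqrt N ^ 2) by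
          rw [hsqrtN, hc]]
        rw [show (Real.sqrt N)⁻¹ * (Real.sqrt N)⁻¹ * (Real.sqrt N ^ 2)
            = ((Real.sqrt N)⁻¹ * Real.sqrt N) * ((Real.sqrt N)⁻¹ * Real.sqrt N) by ring]
        rw [inv_mul_cancel₀ (ne_of_gt hsqrtpos)]
        norm_num
      obtain ⟨U₂, hU1, hU2, hUcol⟩ := exists_unitary_ext g _ horth
      have h := KF1 hk1 hkn C U₂ U₂ hU1 hU2 hU1 hU2
      refine le_trans ?_ h
      have hz : (⟨0, by omega⟩ : Fin n) ∈ F := by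
        simp only [hF, Finset.mem_filter]
        exact ⟨Finset.mem_univ _, hk1⟩
      have hnonneg : ∀ i ∈ F, 0 ≤ ((star U₂ * C * U₂) i i).re := by
        intro i _
        rw [hC, star_mul_vmv_mul_apply]
        have hcc : (∑ t, (starRingEnd ℂ) (v t) * U₂ t i)
            = (starRingEnd ℂ) (∑ l, (starRingEnd ℂ) (U₂ l i) * v l) := by
          rw [map_sum]
          apply Finset.sum_congr rfl
          intro l _
          rw [_root_.map_mul, Complex.conj_conj]
          ring
        rw [hcc, Complex.mul_conj, Complex.ofReal_re]
        exact Complex.normSq_nonneg _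
      refine le_trans ?_ (Finset.single_le_sum hnonneg hz)
      rw [hC, star_mul_vmv_mul_apply]
      have hcol : ∀ l, U₂ l (⟨0, by omega⟩ : Fin n) = (c : ℂ) * v l := by
        intro l
        exact hUcol _ (Finset.mem_singleton_self _) l
      have ha : (∑ l, (starRingEnd ℂ) (U₂ l (⟨0, by omega⟩ : Fin n)) * v l)
          = ((c * N : ℝ) : ℂ) := by
        simp only [hcol]
        have hterm : ∀ l, (starRingEnd ℂ) ((c : ℂ) * v l) * v l
            = (c : ℂ) * ((Complex.normSq (v l) : ℝ) : ℂ) := by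
          intro l
          rw [_root_.map_mul, Complex.conj_ofReal, mul_assoc, conj_mul_self]
        simp only [hterm]
        rw [← Finset.mul_sum, ← Complex.ofReal_sum, ← hN, ← Complex.ofReal_mul]
      have hb : (∑ t, (starRingEnd ℂ) (v t) * U₂ t (⟨0, by omega⟩ : Fin n))
          = ((c * N : ℝ) : ℂ) := by
        simp only [hcol]
        have hterm : ∀ t, (starRingEnd ℂ) (v t) * ((c : ℂ) * v t)
            = (c : ℂ) * ((Complex.normSq (v t) : ℝ) : ℂ) := by
          intro t
          rw [show (starRingEnd ℂ) (v t) * ((c : ℂ) * v t)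
              = (c : ℂ) * ((starRingEnd ℂ) (v t) * v t) by ring]
          rw [conj_mul_self]
        simp only [hterm]
        rw [← Finset.mul_sum, ← Complex.ofReal_sum, ← hN, ← Complex.ofReal_mul]
      rw [ha, hb, ← Complex.ofReal_mul, Complex.ofReal_re]
      have hr : Real.sqrt N ≠ 0 := ne_of_gt hsqrtpos
      have hNr : N = Real.sqrt N * Real.sqrt N := by nlinarith [hsqrtN]
      have h2 : c * N = Real.sqrt N := by
        rw [hc, inv_mul_eq_div, div_eq_iff hr]
        nlinarith [hsqrtN]
      have hfin : c * N * (c * N) = N := by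
        rw [h2]
        nlinarith [hsqrtN]
      linarith [hfin]

lemma quad_diag_re (U : Matrix (Fin n) (Fin n) ℂ) (s : Fin n → ℝ) (i : Fin n) :
    ((star U * diagonal (fun j => (s j : ℂ)) * U) i i).re
      = ∑ l, s l * Complex.normSq (U l i) := by
  rw [star_mul_diag_mul_apply, Complex.re_sum]
  apply Finset.sum_congr rfl
  intro l _
  rw [show (starRingEnd ℂ) (U l i) * ((s l : ℝ) : ℂ) * U l i
      = ((s l : ℝ) : ℂ) * ((starRingEnd ℂ) (U l i) * U l i) by ring]
  rw [conj_mul_self, ← Complex.ofReal_mul, Complex.ofReal_re]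

lemma quad_vmv_re (U : Matrix (Fin n) (Fin n) ℂ) (v : Fin n → ℂ) (i : Fin n) :
    ((star U * vecMulVec v (star v) * U) i i).re
      = Complex.normSq (∑ l, (starRingEnd ℂ) (U l i) * v l) := by
  rw [star_mul_vmv_mul_apply]
  have hcc : (∑ t, (starRingEnd ℂ) (v t) * U t i)
      = (starRingEnd ℂ) (∑ l, (starRingEnd ℂ) (U l i) * v l) := by
    rw [map_sum]
    apply Finset.sum_congr rfl
    intro l _
    rw [_root_.map_mul, Complex.conj_conj]
    ring
  rw [hcc, Complex.mul_conj, Complex.ofReal_re]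

lemma kyFan_diag_add_vmv {k qq : ℕ} (hk1 : 1 ≤ k) (hkq : k ≤ qq) (hqn : qq ≤ n)
    (s : Fin n → ℝ) (hs : Antitone s) (h0 : ∀ i, 0 ≤ s i)
    (hflat : ∀ i : Fin n, k - 1 ≤ (i : ℕ) → (i : ℕ) < qq → s i = s ⟨k - 1, by omega⟩)
    (v : Fin n → ℂ) (hv : ∀ i : Fin n, qq ≤ (i : ℕ) → v i = 0) :
    kyFan k (diagonal (fun i => (s i : ℂ)) + vecMulVec v (star v))
      = (∑ i ∈ Finset.univ.filter (fun i : Fin n => (i : ℕ) < k), s i)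
        + ∑ l, Complex.normSq (v l) := by
  classical
  have hkn : k ≤ n := le_trans hkq hqn
  set D := diagonal (fun i => (s i : ℂ)) with hD
  set C := vecMulVec v (star v) with hC
  set F := Finset.univ.filter (fun i : Fin n => (i : ℕ) < k) with hF
  set N := ∑ l, Complex.normSq (v l) with hN
  set S := ∑ i ∈ F, s i with hS
  apply le_antisymm
  · have h1 := kyFan_subadd hk1 hkn D C
    rw [hD] at h1
    have h2 := kyFan_diag hk1 hkn s hs h0
    have h3 := kyFan_vmv hk1 hkn v
    rw [hC, hD]
    calc kyFan k (diagonal (fun i => (s i : ℂ)) + vecMulVec v (star v))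
        ≤ kyFan k (diagonal (fun i => (s i : ℂ))) + kyFan k (vecMulVec v (star v)) := by
          exact kyFan_subadd hk1 hkn _ _
      _ = S + N := by rw [h2, h3]
  · -- lower bound
    set kk1 := k - 1 with hkk1
    have hkk1n : kk1 < n := by omega
    set i1 : Fin n := ⟨kk1, hkk1n⟩ with hi1
    set b : Fin n → ℂ := fun l => if kk1 ≤ (l : ℕ) then v l else 0 with hb
    set Nb := ∑ l, Complex.normSq (b l) with hNb
    have hNbnn : 0 ≤ Nb := Finset.sum_nonneg (fun l _ => Complex.normSq_nonneg _)
    obtain ⟨w, hw_lo, hw_hi, hw_norm, hw_inner⟩ :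
        ∃ w : Fin n → ℂ, (∀ l : Fin n, (l : ℕ) < kk1 → w l = 0)
          ∧ (∀ l : Fin n, qq ≤ (l : ℕ) → w l = 0)
          ∧ (∑ l, Complex.normSq (w l) = 1)
          ∧ ((∑ l, (starRingEnd ℂ) (w l) * v l) = ((Real.sqrt Nb : ℝ) : ℂ)) := by
      by_cases hNb0 : Nb = 0
      · have hb0 : ∀ l, b l = 0 := by
          intro l
          have h := (Finset.sum_eq_zero_iff_of_nonneg
            (fun t _ => Complex.normSq_nonneg (b t))).mp (by rw [← hNb]; exact hNb0) l
            (Finset.mem_univ l)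
          exact Complex.normSq_eq_zero.mp h
        set w0 : Fin n → ℂ := fun l => if l = i1 then 1 else 0 with hw0
        refine ⟨w0, ?_, ?_, ?_, ?_⟩
        · intro l hl
          simp only [hw0]
          rw [if_neg]
          intro he
          rw [he] at hl
          simp [hi1] at hl
        · intro l hl
          simp only [hw0]
          rw [if_neg]
          intro he
          rw [he] at hl
          simp only [hi1] at hl
          omega
        · simp only [hw0]
          rw [show (fun l => Complex.normSq (if l = i1 then (1:ℂ) else 0))
              = (fun l => if l = i1 then (1:ℝ) else 0) by
            funext l; split_ifs <;> simp]
          rw [Finset.sum_ite_eq' Finset.univ i1 (fun _ => (1:ℝ))]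
          simp
        · simp only [hw0]
          have hterm : ∀ l, (starRingEnd ℂ) (if l = i1 then (1:ℂ) else 0) * v l
              = if l = i1 then v l else 0 := by
            intro l
            split_ifs <;> simp
          simp only [hterm]
          rw [Finset.sum_ite_eq' Finset.univ i1 (fun l => v l)]
          rw [if_pos (Finset.mem_univ _)]
          have hvi1 : v i1 = 0 := by
            have hbb := hb0 i1
            rw [hb] at hbb
            simpa [hi1] using hbb
          rw [hvi1, hNb0]
          simp
      · have hNbpos : 0 < Nb := lt_of_le_of_ne hNbnn (Ne.symm hNb0)
        have hsq : Real.sqrt Nb ^ 2 = Nb := Real.sq_sqrt hNbnn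
        have hsqpos : 0 < Real.sqrt Nb := Real.sqrt_pos.mpr hNbpos
        have hr : Real.sqrt Nb ≠ 0 := ne_of_gt hsqpos
        set c : ℝ := (Real.sqrt Nb)⁻¹ with hc
        set w0 : Fin n → ℂ := fun l => (c : ℂ) * b l with hw0
        have hbz : ∀ l : Fin n, (l : ℕ) < kk1 → b l = 0 := by
          intro l hl
          rw [hb]
          simp only []
          rw [if_neg (by omega)]
        have hbz2 : ∀ l : Fin n, qq ≤ (l : ℕ) → b l = 0 := by
          intro l hl
          rw [hb]
          simp only []
          split_ifs with h
          · exact hv l hl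
          · rfl
        refine ⟨w0, ?_, ?_, ?_, ?_⟩
        · intro l hl
          simp only [hw0]
          rw [hbz l hl, mul_zero]
        · intro l hl
          simp only [hw0]
          rw [hbz2 l hl, mul_zero]
        · simp only [hw0]
          have hterm : ∀ l, Complex.normSq ((c : ℂ) * b l) = c * c * Complex.normSq (b l) := by
            intro l
            rw [Complex.normSq_mul, Complex.normSq_ofReal]
          simp only [hterm]
          rw [← Finset.mul_sum, ← hNb]
          have h1 : c * Real.sqrt Nb = 1 := by rw [hc]; exact inv_mul_cancel₀ hr
          conv_lhs => rw [← hsq]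
          calc c * c * Real.sqrt Nb ^ 2 = (c * Real.sqrt Nb) * (c * Real.sqrt Nb) := by ring
            _ = 1 := by rw [h1]; ring
        · simp only [hw0]
          have hterm : ∀ l, (starRingEnd ℂ) ((c : ℂ) * b l) * v l
              = (c : ℂ) * ((starRingEnd ℂ) (b l) * v l) := by
            intro l
            rw [_root_.map_mul, Complex.conj_ofReal]
            ring
          simp only [hterm]
          have hbv : ∀ l, (starRingEnd ℂ) (b l) * v l = ((Complex.normSq (b l) : ℝ) : ℂ) := by
            intro l
            rw [hb]
            simp only []
            split_ifs with h
            · rw [conj_mul_self]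
            · simp
          simp only [hbv]
          rw [← Finset.mul_sum, ← Complex.ofReal_sum, ← hNb, ← Complex.ofReal_mul]
          congr 1
          have h1 : c * Real.sqrt Nb = 1 := by rw [hc]; exact inv_mul_cancel₀ hr
          conv_lhs => rw [← hsq]
          calc c * Real.sqrt Nb ^ 2 = (c * Real.sqrt Nb) * Real.sqrt Nb := by ring
            _ = Real.sqrt Nb := by rw [h1]; ring
    -- the orthonormal family
    set g : Fin n → (Fin n → ℂ) := fun i l => if (i : ℕ) < kk1 then (if l = i then 1 else 0) else w l
      with hg
    have horth : ∀ i ∈ F, ∀ j ∈ F, (star (g i)) ⬝ᵥ (g j) = if i = j then 1 else 0 := by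
      intro i hi j hj
      rw [hF, Finset.mem_filter] at hi hj
      simp only [dotProduct, Pi.star_apply, RCLike.star_def, hg]
      by_cases h1 : (i : ℕ) < kk1 <;> by_cases h2 : (j : ℕ) < kk1
      · simp only [if_pos h1, if_pos h2]
        have hsp : ∀ l : Fin n, (starRingEnd ℂ) (if l = i then (1:ℂ) else 0) * (if l = j then (1:ℂ) else 0)
            = if l = i ∧ l = j then 1 else 0 := by
          intro l
          by_cases ha : l = i <;> by_cases hb2 : l = j <;> simp [ha, hb2]
        simp only [hsp]
        by_cases hij : i = j
        · subst hij
          simp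
        · rw [if_neg hij]
          apply Finset.sum_eq_zero
          intro l _
          rw [if_neg]
          rintro ⟨ha, hb'⟩
          exact hij (ha ▸ hb' ▸ rfl)
      · simp only [if_pos h1, if_neg h2]
        have hij : i ≠ j := by
          intro he
          rw [he] at h1
          exact h2 h1
        rw [if_neg hij]
        have : ∀ l : Fin n, (starRingEnd ℂ) (if l = i then (1:ℂ) else 0) * w l
            = if l = i then w l else 0 := by
          intro l
          split_ifs <;> simp
        simp only [this]
        rw [Finset.sum_ite_eq' Finset.univ i w, if_pos (Finset.mem_univ _)]
        exact hw_lo i h1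
      · simp only [if_neg h1, if_pos h2]
        have hij : i ≠ j := by
          intro he
          rw [he] at h1
          exact h1 h2
        rw [if_neg hij]
        have : ∀ l : Fin n, (starRingEnd ℂ) (w l) * (if l = j then (1:ℂ) else 0)
            = if l = j then (starRingEnd ℂ) (w l) else 0 := by
          intro l
          split_ifs <;> simp
        simp only [this]
        rw [Finset.sum_ite_eq' Finset.univ j (fun l => (starRingEnd ℂ) (w l)),
          if_pos (Finset.mem_univ _)]
        rw [hw_lo j h2]
        simp
      · have hij : i = j := by
          apply Fin.ext
          omega
        subst hij
        rw [if_pos rfl]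
        simp only [if_neg h1]
        have : ∀ l, (starRingEnd ℂ) (w l) * w l = ((Complex.normSq (w l) : ℝ) : ℂ) := by
          intro l
          rw [conj_mul_self]
        simp only [this]
        rw [← Complex.ofReal_sum, hw_norm]
        simp
    obtain ⟨U₃, hU1, hU2, hUcol⟩ := exists_unitary_ext g F horth
    have h := KF1 hk1 hkn (D + C) U₃ U₃ hU1 hU2 hU1 hU2
    refine le_trans ?_ h
    have hsplit : star U₃ * (D + C) * U₃ = star U₃ * D * U₃ + star U₃ * C * U₃ := by
      noncomm_ring
    have hterm : ∀ i ∈ F, ((star U₃ * (D + C) * U₃) i i).re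
        = (∑ l, s l * Complex.normSq (U₃ l i))
          + Complex.normSq (∑ l, (starRingEnd ℂ) (U₃ l i) * v l) := by
      intro i _
      rw [hsplit]
      rw [Matrix.add_apply, Complex.add_re, hD, hC, quad_diag_re, quad_vmv_re]
    rw [Finset.sum_congr rfl hterm]
    -- split F
    set F' := Finset.univ.filter (fun i : Fin n => (i : ℕ) < kk1) with hF'
    have hi1F' : i1 ∉ F' := by
      rw [hF', Finset.mem_filter]
      rintro ⟨-, hcon⟩
      simp [hi1] at hcon
    have hFsplit : F = insert i1 F' := by
      ext i
      rw [hF, hF', Finset.mem_insert, Finset.mem_filter, Finset.mem_filter]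
      constructor
      · rintro ⟨-, hik⟩
        by_cases hcase : (i : ℕ) < kk1
        · exact Or.inr ⟨Finset.mem_univ _, hcase⟩
        · exact Or.inl (Fin.ext (by simp [hi1]; omega))
      · rintro (rfl | ⟨-, hik⟩)
        · exact ⟨Finset.mem_univ _, by simp [hi1]; omega⟩
        · exact ⟨Finset.mem_univ _, by omega⟩
    -- column values
    have hcol_small : ∀ i : Fin n, i ∈ F' → (∀ l, U₃ l i = if l = i then 1 else 0) := by
      intro i hi l
      rw [hF', Finset.mem_filter] at hi
      have hiF : i ∈ F := by
        rw [hF, Finset.mem_filter]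
        exact ⟨Finset.mem_univ _, by omega⟩
      rw [hUcol i hiF l]
      simp only [hg]
      rw [if_pos hi.2]
    have hcol_i1 : ∀ l, U₃ l i1 = w l := by
      intro l
      have hiF : i1 ∈ F := by
        rw [hF, Finset.mem_filter]
        exact ⟨Finset.mem_univ _, by simp [hi1]; omega⟩
      rw [hUcol i1 hiF l]
      simp only [hg, hi1]
      rw [if_neg (by simp)]
    -- values of the two parts
    have hval_small : ∀ i ∈ F', (∑ l, s l * Complex.normSq (U₃ l i))
        + Complex.normSq (∑ l, (starRingEnd ℂ) (U₃ l i) * v l)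
        = s i + Complex.normSq (v i) := by
      intro i hi
      have hc := hcol_small i hi
      congr 1
      · simp only [hc]
        rw [show (fun l => s l * Complex.normSq (if l = i then (1:ℂ) else 0))
            = (fun l => if l = i then s l else 0) by
          funext l; split_ifs <;> simp]
        rw [Finset.sum_ite_eq' Finset.univ i s, if_pos (Finset.mem_univ _)]
      · simp only [hc]
        have : ∀ l : Fin n, (starRingEnd ℂ) (if l = i then (1:ℂ) else 0) * v l
            = if l = i then v l else 0 := by
          intro l
          split_ifs <;> simp
        simp only [this]
        rw [Finset.sum_ite_eq' Finset.univ i v, if_pos (Finset.mem_univ _)]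
    have hval_i1 : (∑ l, s l * Complex.normSq (U₃ l i1))
        + Complex.normSq (∑ l, (starRingEnd ℂ) (U₃ l i1) * v l)
        = s i1 + Nb := by
      congr 1
      · simp only [hcol_i1]
        have heq : ∀ l, s l * Complex.normSq (w l) = s i1 * Complex.normSq (w l) := by
          intro l
          by_cases hwl : w l = 0
          · rw [hwl]
            simp
          · have hlo : kk1 ≤ (l : ℕ) := by
              by_contra hcon
              exact hwl (hw_lo l (by omega))
            have hhi : (l : ℕ) < qq := by
              by_contra hcon
              exact hwl (hw_hi l (by omega))
            rw [hflat l hlo hhi]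
        rw [Finset.sum_congr rfl (fun l _ => heq l), ← Finset.mul_sum, hw_norm, mul_one]
      · simp only [hcol_i1]
        rw [hw_inner, Complex.normSq_ofReal]
        nlinarith [Real.sq_sqrt hNbnn]
    rw [hFsplit, Finset.sum_insert hi1F', hval_i1, Finset.sum_congr rfl hval_small]
    have hSsplit : S = s i1 + ∑ i ∈ F', s i := by
      rw [hS, hFsplit, Finset.sum_insert hi1F']
    have hNsplit : N = (∑ i ∈ F', Complex.normSq (v i)) + Nb := by
      have h1 : N = (∑ i ∈ F', Complex.normSq (v i))
          + ∑ i ∈ Finset.univ.filter (fun i : Fin n => ¬((i : ℕ) < kk1)), Complex.normSq (v i) := by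
        rw [hN, hF']
        exact (Finset.sum_filter_add_sum_filter_not Finset.univ _ _).symm
      have h2 : Nb = ∑ i ∈ Finset.univ.filter (fun i : Fin n => ¬((i : ℕ) < kk1)),
          Complex.normSq (v i) := by
        rw [hNb]
        simp only [hb]
        rw [Finset.sum_filter]
        apply Finset.sum_congr rfl
        intro l _
        by_cases hc : kk1 ≤ (l : ℕ)
        · rw [if_pos hc, if_pos (by omega)]
        · rw [if_neg hc, if_neg (by omega)]
          simp
      rw [h1, ← h2]
    rw [Finset.sum_add_distrib]
    rw [hSsplit, hNsplit]
    ring_nf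
    apply le_of_eq
    ring

lemma E_apply (i0 j0 : Fin n) (a b : Fin n) :
    (vecMulVec (Pi.single i0 (1:ℂ)) (star (Pi.single j0 (1:ℂ)))) a b
      = if a = i0 ∧ b = j0 then 1 else 0 := by
  rw [Matrix.vecMulVec_apply, Pi.star_apply, Pi.single_apply, Pi.single_apply]
  by_cases h1 : a = i0 <;> by_cases h2 : b = j0 <;> simp [h1, h2]

lemma re_amgm (z w : ℂ) : (starRingEnd ℂ z * w).re ≤ (Complex.normSq z + Complex.normSq w) / 2 := by
  have h1 : (starRingEnd ℂ z * w).re ≤ ‖starRingEnd ℂ z * w‖ := Complex.re_le_norm _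
  have h2 : ‖starRingEnd ℂ z * w‖ = ‖z‖ * ‖w‖ := by
    rw [norm_mul, Complex.norm_conj]
  have h3 : ‖z‖ * ‖w‖ ≤ (Complex.normSq z + Complex.normSq w) / 2 := by
    rw [← Complex.sq_norm, ← Complex.sq_norm]
    nlinarith [norm_nonneg z, norm_nonneg w, sq_nonneg (‖z‖ - ‖w‖)]
  linarith

lemma kyFan_C2 {k : ℕ} (hk1 : 1 ≤ k) (hkn : k ≤ n) (i0 j0 : Fin n)
    (hi0 : k ≤ (i0 : ℕ)) (hj0 : k ≤ (j0 : ℕ)) :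
    kyFan k (diagonal (fun l : Fin n => if (l : ℕ) < k then (1:ℂ) else 0)
      + vecMulVec (Pi.single i0 (1:ℂ)) (star (Pi.single j0 (1:ℂ)))) = k := by
  classical
  set Dk := diagonal (fun l : Fin n => if (l : ℕ) < k then (1:ℂ) else 0) with hDk
  set E := vecMulVec (Pi.single i0 (1:ℂ)) (star (Pi.single j0 (1:ℂ))) with hE
  set F := Finset.univ.filter (fun i : Fin n => (i : ℕ) < k) with hF
  have hcard : F.card = k := card_filter_lt hkn
  have hdiagE : ∀ i ∈ F, E i i = 0 := by
    intro i hi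
    rw [hF, Finset.mem_filter] at hi
    rw [hE, E_apply]
    rw [if_neg]
    rintro ⟨h1, -⟩
    rw [h1] at hi
    omega
  apply le_antisymm
  · obtain ⟨U₁, W₁, ⟨hU1, hU2⟩, ⟨hW1, hW2⟩, heq⟩ := KF2 k (Dk + E)
    rw [← heq]
    have hterm : ∀ i ∈ F, ((star U₁ * (Dk + E) * W₁) i i).re ≤ 1 := by
      intro i _
      have hsplit : star U₁ * (Dk + E) * W₁ = star U₁ * Dk * W₁ + star U₁ * E * W₁ := by
        noncomm_ring
      rw [hsplit, Matrix.add_apply, Complex.add_re]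
      -- diagonal part
      have hd : ((star U₁ * Dk * W₁) i i).re
          ≤ ∑ l ∈ F, (Complex.normSq (U₁ l i) + Complex.normSq (W₁ l i)) / 2 := by
        rw [hDk, star_mul_diag_mul_apply, Complex.re_sum]
        have hb : ∀ l : Fin n, ((starRingEnd ℂ) (U₁ l i) * (if (l : ℕ) < k then (1:ℂ) else 0) * W₁ l i).re
            ≤ if (l : ℕ) < k then (Complex.normSq (U₁ l i) + Complex.normSq (W₁ l i)) / 2 else 0 := by
          intro l
          split_ifs with hl
          · rw [mul_one]
            exact re_amgm _ _
          · rw [mul_zero, zero_mul]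
            simp
        refine le_trans (Finset.sum_le_sum (fun l _ => hb l)) ?_
        rw [hF, ← Finset.sum_filter]
      -- E part
      have heE : ((star U₁ * E * W₁) i i).re
          ≤ (Complex.normSq (U₁ i0 i) + Complex.normSq (W₁ j0 i)) / 2 := by
        rw [hE, star_mul_vmv_mul_apply]
        have ha : (∑ l, (starRingEnd ℂ) (U₁ l i) * (Pi.single i0 (1:ℂ) : Fin n → ℂ) l)
            = (starRingEnd ℂ) (U₁ i0 i) := by
          have : ∀ l, (starRingEnd ℂ) (U₁ l i) * (Pi.single i0 (1:ℂ) : Fin n → ℂ) l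
              = if l = i0 then (starRingEnd ℂ) (U₁ l i) else 0 := by
            intro l
            rw [Pi.single_apply]
            split_ifs <;> simp
          simp only [this]
          rw [Finset.sum_ite_eq' Finset.univ i0, if_pos (Finset.mem_univ _)]
        have hb : (∑ t, (starRingEnd ℂ) ((Pi.single j0 (1:ℂ) : Fin n → ℂ) t) * W₁ t i) = W₁ j0 i := by
          have : ∀ t, (starRingEnd ℂ) ((Pi.single j0 (1:ℂ) : Fin n → ℂ) t) * W₁ t i
              = if t = j0 then W₁ t i else 0 := by
            intro t
            rw [Pi.single_apply]
            split_ifs <;> simp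
          simp only [this]
          rw [Finset.sum_ite_eq' Finset.univ j0, if_pos (Finset.mem_univ _)]
        rw [ha, hb]
        exact re_amgm _ _
      have hi0F : i0 ∉ F := by
        rw [hF, Finset.mem_filter]
        rintro ⟨-, hcon⟩
        omega
      have hj0F : j0 ∉ F := by
        rw [hF, Finset.mem_filter]
        rintro ⟨-, hcon⟩
        omega
      have hU : ∑ l ∈ insert i0 F, Complex.normSq (U₁ l i) ≤ 1 := by
        rw [← col_normSq hU1 i]
        apply Finset.sum_le_sum_of_subset_of_nonneg (Finset.subset_univ _)
        intro l _ _
        exact Complex.normSq_nonneg _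
      have hW : ∑ l ∈ insert j0 F, Complex.normSq (W₁ l i) ≤ 1 := by
        rw [← col_normSq hW1 i]
        apply Finset.sum_le_sum_of_subset_of_nonneg (Finset.subset_univ _)
        intro l _ _
        exact Complex.normSq_nonneg _
      rw [Finset.sum_insert hi0F] at hU
      rw [Finset.sum_insert hj0F] at hW
      have hsum2 : ∑ l ∈ F, (Complex.normSq (U₁ l i) + Complex.normSq (W₁ l i)) / 2
          = ((∑ l ∈ F, Complex.normSq (U₁ l i)) + ∑ l ∈ F, Complex.normSq (W₁ l i)) / 2 := by
        rw [← Finset.sum_add_distrib, Finset.sum_div]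
      rw [hsum2] at hd
      linarith
    calc ∑ i ∈ F, ((star U₁ * (Dk + E) * W₁) i i).re ≤ ∑ i ∈ F, (1:ℝ) :=
          Finset.sum_le_sum hterm
      _ = k := by rw [Finset.sum_const, hcard, nsmul_eq_mul, mul_one]
  · have h := KF1 hk1 hkn (Dk + E) 1 1 (by simp) (by simp) (by simp) (by simp)
    simp only [star_one, Matrix.one_mul, Matrix.mul_one] at h
    refine le_trans (le_of_eq ?_) h
    have hterm : ∀ i ∈ F, ((Dk + E) i i).re = 1 := by
      intro i hi
      rw [Matrix.add_apply, hdiagE i hi, add_zero, hDk, Matrix.diagonal_apply_eq]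
      rw [hF, Finset.mem_filter] at hi
      rw [if_pos hi.2]
      simp
    rw [Finset.sum_congr rfl hterm, Finset.sum_const, hcard, nsmul_eq_mul, mul_one]

lemma kyFan_diag_add_C2 {k : ℕ} (hk1 : 1 ≤ k) (hkn : k ≤ n)
    (s : Fin n → ℝ) (hs : Antitone s) (h0 : ∀ i, 0 ≤ s i) (i0 j0 : Fin n)
    (hi0 : k ≤ (i0 : ℕ)) (hj0 : k ≤ (j0 : ℕ)) :
    kyFan k (diagonal (fun i => (s i : ℂ))
        + (diagonal (fun l : Fin n => if (l : ℕ) < k then (1:ℂ) else 0)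
          + vecMulVec (Pi.single i0 (1:ℂ)) (star (Pi.single j0 (1:ℂ)))))
      = (∑ i ∈ Finset.univ.filter (fun i : Fin n => (i : ℕ) < k), s i) + k := by
  classical
  set D := diagonal (fun i => (s i : ℂ)) with hD
  set Dk := diagonal (fun l : Fin n => if (l : ℕ) < k then (1:ℂ) else 0) with hDk
  set E := vecMulVec (Pi.single i0 (1:ℂ)) (star (Pi.single j0 (1:ℂ))) with hE
  set F := Finset.univ.filter (fun i : Fin n => (i : ℕ) < k) with hF
  have hcard : F.card = k := card_filter_lt hkn
  apply le_antisymm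
  · have h1 := kyFan_subadd hk1 hkn D (Dk + E)
    have h2 := kyFan_diag hk1 hkn s hs h0
    have h3 := kyFan_C2 hk1 hkn i0 j0 hi0 hj0
    refine le_trans h1 ?_
    rw [hD, hDk, hE, hF, h2, h3]
  · have h := KF1 hk1 hkn (D + (Dk + E)) 1 1 (by simp) (by simp) (by simp) (by simp)
    simp only [star_one, Matrix.one_mul, Matrix.mul_one] at h
    refine le_trans (le_of_eq ?_) h
    have hterm : ∀ i ∈ F, ((D + (Dk + E)) i i).re = s i + 1 := by
      intro i hi
      rw [hF, Finset.mem_filter] at hi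
      have hEii : E i i = 0 := by
        rw [hE, E_apply, if_neg]
        rintro ⟨hc, -⟩
        rw [hc] at hi
        omega
      rw [Matrix.add_apply, Matrix.add_apply, hEii, add_zero, hD, hDk,
        Matrix.diagonal_apply_eq, Matrix.diagonal_apply_eq, if_pos hi.2]
      simp
    rw [Finset.sum_congr rfl hterm, Finset.sum_add_distrib, Finset.sum_const, hcard,
      nsmul_eq_mul, mul_one]

lemma card_filter_le {a : ℕ} (ha : a ≤ n) :
    (Finset.univ.filter (fun i : Fin n => a ≤ (i : ℕ))).card = n - a := by
  classical
  have h := card_filter_Ico (a := a) (b := n) (le_refl n)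
  have he : (Finset.univ.filter (fun i : Fin n => a ≤ (i : ℕ) ∧ (i : ℕ) < n))
      = (Finset.univ.filter (fun i : Fin n => a ≤ (i : ℕ))) := by
    ext i
    simp only [Finset.mem_filter, Finset.mem_univ, true_and]
    constructor
    · rintro ⟨h1, -⟩; exact h1
    · intro h1; exact ⟨h1, i.isLt⟩
  rw [he] at h
  exact h

lemma std_eq_vmv (i0 j0 : Fin n) :
    Matrix.single i0 j0 (1:ℂ) = vecMulVec (Pi.single i0 (1:ℂ)) (star (Pi.single j0 (1:ℂ))) := by
  ext a b
  rw [E_apply]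
  simp only [Matrix.single, Matrix.of_apply]
  by_cases h1 : a = i0 <;> by_cases h2 : b = j0 <;> simp [h1, h2] <;> tauto

lemma std_apply (i0 j0 a b : Fin n) :
    Matrix.single i0 j0 (1:ℂ) a b = (if a = i0 then (1:ℂ) else 0) * (if b = j0 then 1 else 0) := by
  rw [std_eq_vmv, E_apply]
  by_cases h1 : a = i0 <;> by_cases h2 : b = j0 <;> simp [h1, h2]

lemma card_filter_prod (c1 c2 : Fin n → Prop) [DecidablePred c1] [DecidablePred c2] :
    (Finset.univ.filter (fun p : Fin n × Fin n => c1 p.1 ∧ c2 p.2)).card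
      = (Finset.univ.filter c1).card * (Finset.univ.filter c2).card := by
  classical
  rw [← Finset.card_product]
  congr 1
  ext p
  simp only [Finset.mem_filter, Finset.mem_product, Finset.mem_univ, true_and]

end KFAux

set_option maxRecDepth 20000 in
theorem stmt7 (k m q : ℕ) (hk : 1 < k) (hm : 0 < m)
    (hkq : k ≤ q) (hqn : q ≤ k + m)
    (A : Matrix (Fin (k + m)) (Fin (k + m)) ℂ)
    (hA : svN A (k - 1) = svN A k)
    (hq : svN A (q - 1) = svN A (k - 1))
    (hqmax : ∀ j : ℕ, q < j → j ≤ k + m → svN A (j - 1) ≠ svN A (k - 1)) :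
    k ^ 2 + 2 * k * (q - k) + m ^ 2 ≤
      Module.finrank ℂ (Submodule.span ℂ {B | KFParallel k A B}) := by
  classical
  have hk1 : 1 ≤ k := le_of_lt hk
  have hkn : k ≤ k + m := Nat.le_add_right k m
  obtain ⟨U, V, ⟨hU1, hU2⟩, ⟨hV1, hV2⟩, hsvd⟩ := KFAux.exists_svd A
  have hs_anti := KFAux.sv_antitone A
  have hs_nn := KFAux.sv_nonneg A
  have hkk1n : k - 1 < k + m := by omega
  have hq1n : q - 1 < k + m := by omega
  have hqflat : sv A ⟨q - 1, hq1n⟩ = sv A ⟨k - 1, hkk1n⟩ := by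
    have h1 := hq
    rw [svN, svN, dif_pos hq1n, dif_pos hkk1n] at h1
    exact h1
  have hflat : ∀ i : Fin (k + m), k - 1 ≤ (i : ℕ) → (i : ℕ) < q →
      sv A i = sv A ⟨k - 1, hkk1n⟩ := by
    intro i hlo hhi
    apply le_antisymm
    · exact hs_anti (by rw [Fin.le_def]; exact hlo)
    · rw [← hqflat]
      exact hs_anti (by rw [Fin.le_def]; simp only []; omega)
  set PP := Submodule.span ℂ {B | KFParallel k A B} with hPP
  -- membership of the two generator families
  have hmem1 : ∀ v : Fin (k + m) → ℂ, (∀ i : Fin (k + m), q ≤ (i : ℕ) → v i = 0) →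
      (U * vecMulVec v (star v) * star V) ∈ PP := by
    intro v hv
    apply Submodule.subset_span
    refine ⟨1, by simp, ?_⟩
    rw [one_smul]
    have h1 : A + U * vecMulVec v (star v) * star V
        = U * (diagonal (fun i => (sv A i : ℂ)) + vecMulVec v (star v)) * star V := by
      conv_lhs => rw [hsvd]
      noncomm_ring
    rw [h1, KFAux.kyFan_unitary hk1 hkn _ U V hU1 hU2 hV1 hV2,
      KFAux.kyFan_unitary hk1 hkn _ U V hU1 hU2 hV1 hV2,
      KFAux.kyFan_diag_add_vmv hk1 hkq hqn (sv A) hs_anti hs_nn hflat v hv,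
      KFAux.kyFan_vmv hk1 hkn v]
    rfl
  have hmem2 : ∀ i0 j0 : Fin (k + m), k ≤ (i0 : ℕ) → k ≤ (j0 : ℕ) →
      (U * (diagonal (fun l : Fin (k + m) => if (l : ℕ) < k then (1:ℂ) else 0)
        + vecMulVec (Pi.single i0 (1:ℂ)) (star (Pi.single j0 (1:ℂ)))) * star V) ∈ PP := by
    intro i0 j0 hi0 hj0
    apply Submodule.subset_span
    refine ⟨1, by simp, ?_⟩
    rw [one_smul]
    have h1 : A + U * (diagonal (fun l : Fin (k + m) => if (l : ℕ) < k then (1:ℂ) else 0)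
          + vecMulVec (Pi.single i0 (1:ℂ)) (star (Pi.single j0 (1:ℂ)))) * star V
        = U * (diagonal (fun i => (sv A i : ℂ))
          + (diagonal (fun l : Fin (k + m) => if (l : ℕ) < k then (1:ℂ) else 0)
            + vecMulVec (Pi.single i0 (1:ℂ)) (star (Pi.single j0 (1:ℂ))))) * star V := by
      conv_lhs => rw [hsvd]
      noncomm_ring
    rw [h1, KFAux.kyFan_unitary hk1 hkn _ U V hU1 hU2 hV1 hV2,
      KFAux.kyFan_unitary hk1 hkn _ U V hU1 hU2 hV1 hV2,
      KFAux.kyFan_diag_add_C2 hk1 hkn (sv A) hs_anti hs_nn i0 j0 hi0 hj0,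
      KFAux.kyFan_C2 hk1 hkn i0 j0 hi0 hj0]
    rfl
  -- T operations
  have hTadd : ∀ X Y : Matrix (Fin (k + m)) (Fin (k + m)) ℂ,
      U * (X + Y) * star V = U * X * star V + U * Y * star V := by
    intro X Y
    noncomm_ring
  have hTsmul : ∀ (c : ℂ) (X : Matrix (Fin (k + m)) (Fin (k + m)) ℂ),
      U * (c • X) * star V = c • (U * X * star V) := by
    intro c X
    rw [Matrix.mul_smul, Matrix.smul_mul]
  -- single basis vectors
  have hsingle_supp : ∀ i : Fin (k + m), (i : ℕ) < q →
      ∀ l : Fin (k + m), q ≤ (l : ℕ) → (Pi.single i (1:ℂ) : Fin (k+m) → ℂ) l = 0 := by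
    intro i hi l hl
    rw [Pi.single_apply, if_neg]
    intro he
    rw [he] at hl
    omega
  -- std basis matrices with both indices < q are in PP
  have hTsub : ∀ X Y : Matrix (Fin (k + m)) (Fin (k + m)) ℂ,
      U * (X - Y) * star V = U * X * star V - U * Y * star V := by
    intro X Y
    noncomm_ring
  have hstd1 : ∀ i j : Fin (k + m), (i : ℕ) < q → (j : ℕ) < q →
      (U * Matrix.single i j (1:ℂ) * star V) ∈ PP := by
    intro i j hi hj
    have hEii : (U * Matrix.single i i (1:ℂ) * star V) ∈ PP := by
      rw [KFAux.std_eq_vmv]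
      exact hmem1 _ (hsingle_supp i hi)
    have hEjj : (U * Matrix.single j j (1:ℂ) * star V) ∈ PP := by
      rw [KFAux.std_eq_vmv]
      exact hmem1 _ (hsingle_supp j hj)
    by_cases hij : i = j
    · subst hij
      exact hEii
    · set v1 : Fin (k + m) → ℂ := fun l => (Pi.single i (1:ℂ) : Fin (k+m) → ℂ) l + (Pi.single j (1:ℂ) : Fin (k+m) → ℂ) l with hv1
      set v2 : Fin (k + m) → ℂ := fun l => (Pi.single i (1:ℂ) : Fin (k+m) → ℂ) l + Complex.I * (Pi.single j (1:ℂ) : Fin (k+m) → ℂ) l with hv2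
      have hv1s : ∀ l : Fin (k + m), q ≤ (l : ℕ) → v1 l = 0 := by
        intro l hl
        simp only [hv1]
        rw [hsingle_supp i hi l hl, hsingle_supp j hj l hl, add_zero]
      have hv2s : ∀ l : Fin (k + m), q ≤ (l : ℕ) → v2 l = 0 := by
        intro l hl
        simp only [hv2]
        rw [hsingle_supp i hi l hl, hsingle_supp j hj l hl, mul_zero, add_zero]
      have hM1mem := hmem1 v1 hv1s
      have hM2mem := hmem1 v2 hv2s
      have hM1 : vecMulVec v1 (star v1) = Matrix.single i i 1 + Matrix.single i j 1
          + Matrix.single j i 1 + Matrix.single j j 1 := by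
        ext a b
        have h1 : v1 a = (if a = i then (1:ℂ) else 0) + (if a = j then 1 else 0) := by
          simp only [hv1, Pi.single_apply]
        have h2 : (starRingEnd ℂ) (v1 b) = (if b = i then (1:ℂ) else 0) + (if b = j then 1 else 0) := by
          simp only [hv1, Pi.single_apply, map_add, apply_ite (starRingEnd ℂ), _root_.map_one,
            map_zero]
        rw [Matrix.vecMulVec_apply, Pi.star_apply, RCLike.star_def, h1, h2]
        simp only [Matrix.add_apply, KFAux.std_apply]
        ring
      have hM2 : vecMulVec v2 (star v2) = Matrix.single i i 1 + Matrix.single j j 1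
          + (-Complex.I) • Matrix.single i j 1 + Complex.I • Matrix.single j i 1 := by
        ext a b
        have h1 : v2 a = (if a = i then (1:ℂ) else 0) + Complex.I * (if a = j then 1 else 0) := by
          simp only [hv2, Pi.single_apply]
        have h2 : (starRingEnd ℂ) (v2 b)
            = (if b = i then (1:ℂ) else 0) + (-Complex.I) * (if b = j then 1 else 0) := by
          simp only [hv2, Pi.single_apply, map_add, _root_.map_mul, Complex.conj_I,
            apply_ite (starRingEnd ℂ), _root_.map_one, map_zero]
        rw [Matrix.vecMulVec_apply, Pi.star_apply, RCLike.star_def, h1, h2]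
        simp only [Matrix.add_apply, Matrix.smul_apply, KFAux.std_apply, smul_eq_mul]
        linear_combination (-(if a = j then (1:ℂ) else 0) * (if b = j then (1:ℂ) else 0)) *
          Complex.I_sq
      -- symmetric part
      have hSymId : Matrix.single i j (1:ℂ) + Matrix.single j i 1
          = vecMulVec v1 (star v1) - Matrix.single i i 1 - Matrix.single j j 1 := by
        rw [hM1]
        abel
      have hSym : (U * (Matrix.single i j (1:ℂ) + Matrix.single j i 1) * star V) ∈ PP := by
        rw [hSymId, hTsub, hTsub]
        exact Submodule.sub_mem _ (Submodule.sub_mem _ hM1mem hEii) hEjj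
      have hAsymId : (-Complex.I) • Matrix.single i j (1:ℂ) + Complex.I • Matrix.single j i 1
          = vecMulVec v2 (star v2) - Matrix.single i i 1 - Matrix.single j j 1 := by
        rw [hM2]
        abel
      have hAsym : (U * ((-Complex.I) • Matrix.single i j (1:ℂ)
          + Complex.I • Matrix.single j i 1) * star V) ∈ PP := by
        rw [hAsymId, hTsub, hTsub]
        exact Submodule.sub_mem _ (Submodule.sub_mem _ hM2mem hEii) hEjj
      have hfinal : Matrix.single i j (1:ℂ) = ((2:ℂ) * Complex.I)⁻¹ •
          (Complex.I • (Matrix.single i j (1:ℂ) + Matrix.single j i 1)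
            - ((-Complex.I) • Matrix.single i j (1:ℂ) + Complex.I • Matrix.single j i 1)) := by
        have h2I : ((2:ℂ) * Complex.I) ≠ 0 := by simp [Complex.I_ne_zero]
        match_scalars
        · field_simp
          ring
        · field_simp
          try ring
      rw [hfinal, hTsmul, hTsub, hTsmul]
      exact Submodule.smul_mem _ _
        (Submodule.sub_mem _ (Submodule.smul_mem _ _ hSym) hAsym)
  have hstd2 : ∀ i j : Fin (k + m), k ≤ (i : ℕ) → k ≤ (j : ℕ) →
      (U * Matrix.single i j (1:ℂ) * star V) ∈ PP := by
    intro i j hi hj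
    have hC2 := hmem2 i j hi hj
    have hDkmem : (U * diagonal (fun l : Fin (k + m) => if (l : ℕ) < k then (1:ℂ) else 0)
        * star V) ∈ PP := by
      have hsum : diagonal (fun l : Fin (k + m) => if (l : ℕ) < k then (1:ℂ) else 0)
          = ∑ l ∈ Finset.univ.filter (fun l : Fin (k + m) => (l : ℕ) < k),
              vecMulVec (Pi.single l (1:ℂ)) (star (Pi.single l (1:ℂ))) := by
        ext a b
        rw [Matrix.sum_apply]
        simp only [KFAux.E_apply]
        by_cases hab : a = b
        · subst hab
          rw [Matrix.diagonal_apply_eq]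
          have hterm : ∀ l : Fin (k + m), (if a = l ∧ a = l then (1:ℂ) else 0)
              = if l = a then 1 else 0 := by
            intro l
            by_cases h : l = a <;> simp [h] <;> tauto
          rw [Finset.sum_congr rfl (fun l _ => hterm l)]
          rw [Finset.sum_ite_eq' _ a (fun _ => (1:ℂ))]
          simp only [Finset.mem_filter, Finset.mem_univ, true_and]
        · rw [Matrix.diagonal_apply_ne _ hab]
          symm
          apply Finset.sum_eq_zero
          intro l _
          rw [if_neg]
          rintro ⟨h1, h2⟩
          exact hab (h1.trans h2.symm)
      rw [hsum, Matrix.mul_sum, Matrix.sum_mul]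
      apply Submodule.sum_mem
      intro l hl
      rw [Finset.mem_filter] at hl
      exact hmem1 _ (hsingle_supp l (by omega))
    have hdiff : U * Matrix.single i j (1:ℂ) * star V
        = (U * (diagonal (fun l : Fin (k + m) => if (l : ℕ) < k then (1:ℂ) else 0)
            + vecMulVec (Pi.single i (1:ℂ)) (star (Pi.single j (1:ℂ)))) * star V)
          - (U * diagonal (fun l : Fin (k + m) => if (l : ℕ) < k then (1:ℂ) else 0) * star V) := by
      rw [← hTsub]
      rw [add_sub_cancel_left]
      rw [KFAux.std_eq_vmv]
    rw [hdiff]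
    exact Submodule.sub_mem _ hC2 hDkmem
  -- the index set
  set RRs : Finset (Fin (k + m) × Fin (k + m)) := Finset.univ.filter
      (fun p => ((p.1 : ℕ) < q ∧ (p.2 : ℕ) < q) ∨ (k ≤ (p.1 : ℕ) ∧ k ≤ (p.2 : ℕ))) with hRRs
  have hmemAll : ∀ p ∈ RRs, (U * Matrix.single p.1 p.2 (1:ℂ) * star V) ∈ PP := by
    intro p hp
    rw [hRRs, Finset.mem_filter] at hp
    rcases hp.2 with ⟨h1, h2⟩ | ⟨h1, h2⟩
    · exact hstd1 _ _ h1 h2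
    · exact hstd2 _ _ h1 h2
  -- linear equivalence X ↦ U X V*
  set e : Matrix (Fin (k + m)) (Fin (k + m)) ℂ ≃ₗ[ℂ] Matrix (Fin (k + m)) (Fin (k + m)) ℂ :=
    { toFun := fun X => U * X * star V
      map_add' := fun X Y => hTadd X Y
      map_smul' := fun c X => hTsmul c X
      invFun := fun Y => star U * Y * V
      left_inv := by
        intro X
        show star U * (U * X * star V) * V = X
        calc star U * (U * X * star V) * V = (star U * U) * X * (star V * V) := by noncomm_ring
          _ = X := by rw [hU1, hV1, Matrix.one_mul, Matrix.mul_one]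
      right_inv := by
        intro Y
        show U * (star U * Y * V) * star V = Y
        calc U * (star U * Y * V) * star V = (U * star U) * Y * (V * star V) := by noncomm_ring
          _ = Y := by rw [hU2, hV2, Matrix.one_mul, Matrix.mul_one] } with he
  have hli0 : LinearIndependent ℂ
      (fun p : RRs => Matrix.single (p : Fin (k + m) × Fin (k + m)).1
        (p : Fin (k + m) × Fin (k + m)).2 (1:ℂ)) := by
    have hb := (Matrix.stdBasis ℂ (Fin (k + m)) (Fin (k + m))).linearIndependent
    have hcomp := hb.comp (Subtype.val : RRs → (Fin (k + m) × Fin (k + m)))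
      Subtype.val_injective
    have hfe : (fun p : RRs => Matrix.single (p : Fin (k + m) × Fin (k + m)).1
        (p : Fin (k + m) × Fin (k + m)).2 (1:ℂ))
        = (⇑(Matrix.stdBasis ℂ (Fin (k + m)) (Fin (k + m))) ∘ (Subtype.val : RRs → _)) := by
      funext p
      rw [Function.comp_apply, show (p : Fin (k + m) × Fin (k + m))
          = ((p : Fin (k + m) × Fin (k + m)).1, (p : Fin (k + m) × Fin (k + m)).2) from rfl,
        Matrix.stdBasis_eq_single]
    rw [hfe]
    exact hcomp
  have hli : LinearIndependent ℂ
      (fun p : RRs => U * Matrix.single (p : Fin (k + m) × Fin (k + m)).1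
        (p : Fin (k + m) × Fin (k + m)).2 (1:ℂ) * star V) := by
    have hmap := hli0.map' e.toLinearMap e.ker
    exact hmap
  have hrange : Set.range (fun p : RRs => U * Matrix.single (p : Fin (k + m) × Fin (k + m)).1
      (p : Fin (k + m) × Fin (k + m)).2 (1:ℂ) * star V) ⊆ (PP : Set _) := by
    rintro x ⟨p, rfl⟩
    exact hmemAll p p.2
  have hspanle : Submodule.span ℂ (Set.range (fun p : RRs =>
      U * Matrix.single (p : Fin (k + m) × Fin (k + m)).1
        (p : Fin (k + m) × Fin (k + m)).2 (1:ℂ) * star V)) ≤ PP :=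
    Submodule.span_le.mpr hrange
  have hfin1 := finrank_span_eq_card hli
  have hmono := Submodule.finrank_mono hspanle
  rw [hfin1] at hmono
  rw [Fintype.card_coe] at hmono
  -- cardinality computation
  refine le_trans ?_ hmono
  obtain ⟨d, rfl⟩ : ∃ d, q = k + d := ⟨q - k, by omega⟩
  have hqk : k + d - k = d := by omega
  rw [hqk]
  set P1 := Finset.univ.filter
      (fun p : Fin (k + m) × Fin (k + m) => (p.1 : ℕ) < k + d ∧ (p.2 : ℕ) < k + d) with hP1
  set P2 := Finset.univ.filter
      (fun p : Fin (k + m) × Fin (k + m) => k ≤ (p.1 : ℕ) ∧ k ≤ (p.2 : ℕ)) with hP2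
  have hUnion : RRs = P1 ∪ P2 := by
    rw [hRRs, hP1, hP2, Finset.filter_or]
  have hInter : P1 ∩ P2 = Finset.univ.filter
      (fun p : Fin (k + m) × Fin (k + m) =>
        (k ≤ (p.1 : ℕ) ∧ (p.1 : ℕ) < k + d) ∧ (k ≤ (p.2 : ℕ) ∧ (p.2 : ℕ) < k + d)) := by
    rw [hP1, hP2, ← Finset.filter_and]
    apply Finset.filter_congr
    intro p _
    constructor
    · rintro ⟨⟨h1, h2⟩, h3, h4⟩
      exact ⟨⟨h3, h1⟩, h4, h2⟩
    · rintro ⟨⟨h1, h2⟩, h3, h4⟩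
      exact ⟨⟨h2, h4⟩, h1, h3⟩
  have hcard1 : P1.card = (k + d) * (k + d) := by
    have h := KFAux.card_filter_prod (n := k + m)
      (fun i => (i : ℕ) < k + d) (fun i => (i : ℕ) < k + d)
    rw [KFAux.card_filter_lt hqn] at h
    rw [hP1]
    convert h using 2
  have hcard2 : P2.card = m * m := by
    have h := KFAux.card_filter_prod (n := k + m)
      (fun i => k ≤ (i : ℕ)) (fun i => k ≤ (i : ℕ))
    rw [KFAux.card_filter_le hkn] at h
    rw [hP2]
    have hm' : k + m - k = m := by omega
    rw [hm'] at h
    convert h using 2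
  have hcard12 : (P1 ∩ P2).card = d * d := by
    have h := KFAux.card_filter_prod (n := k + m)
      (fun i => k ≤ (i : ℕ) ∧ (i : ℕ) < k + d) (fun i => k ≤ (i : ℕ) ∧ (i : ℕ) < k + d)
    rw [KFAux.card_filter_Ico hqn] at h
    have hd' : k + d - k = d := by omega
    rw [hd'] at h
    rw [hInter]
    convert h using 2
  have hIE := Finset.card_union_add_card_inter P1 P2
  rw [← hUnion, hcard1, hcard2, hcard12] at hIE
  have hring : k ^ 2 + 2 * k * d + m ^ 2 + d * d = (k + d) * (k + d) + m * m := by ring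
  omega
end

section
/- Every element of the cone 𝒞 = {X₁ ⊕ X₂ : X₁ psd, s_k(X₁) ≥ s₁(X₂)} is parallel (in the Ky-Fan k-norm) to any matrix A = A₁ ⊕ A₂ with A₁ ∈ M_k(ℂ) positive definite and s_k(A₁) > s₁(A₂). -/
open Matrix
open scoped ComplexOrder

section KFAux

open Polynomial

namespace KF

/-! ### Sorting machinery -/

noncomputable def dsort {n : ℕ} (g : Fin n → ℝ) : Fin n → ℝ := fun i => (g ∘ Tuple.sort g) i.rev

lemma sv_eq_dsort {n : ℕ} (A : Matrix (Fin n) (Fin n) ℂ) (i : Fin n) :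
    sv A i = Real.sqrt (dsort (Matrix.isHermitian_conjTranspose_mul_self A).eigenvalues i) := rfl

lemma antitone_dsort {n : ℕ} (g : Fin n → ℝ) : Antitone (dsort g) := fun _ _ h =>
  Tuple.monotone_sort g (Fin.rev_le_rev.mpr h)

lemma mset_univ_map_eq_ofFn {α : Type*} {n : ℕ} (f : Fin n → α) :
    Finset.univ.val.map f = ↑(List.ofFn f) := by
  rw [Fin.univ_def]
  simp [List.ofFn_eq_map]

lemma mset_comp_perm {α : Type*} {n : ℕ} (g : Fin n → α) (e : Equiv.Perm (Fin n)) :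
    Finset.univ.val.map (g ∘ e) = Finset.univ.val.map g := by
  rw [← Multiset.map_map]
  congr 1
  calc Multiset.map (⇑e) Finset.univ.val = (Finset.univ.map e.toEmbedding).val := rfl
    _ = Finset.univ.val := by rw [Finset.map_univ_equiv]

lemma mset_dsort {n : ℕ} (g : Fin n → ℝ) :
    Finset.univ.val.map (dsort g) = Finset.univ.val.map g := by
  have h : dsort g = g ∘ (Fin.revPerm.trans (Tuple.sort g)) := rfl
  rw [h, mset_comp_perm]

lemma mono_unique {n : ℕ} {f g : Fin n → ℝ} (hf : Monotone f) (hg : Monotone g)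
    (h : Finset.univ.val.map f = Finset.univ.val.map g) : f = g := by
  rw [mset_univ_map_eq_ofFn, mset_univ_map_eq_ofFn, Multiset.coe_eq_coe] at h
  exact List.ofFn_injective (List.Perm.eq_of_sortedLE hf.sortedLE_ofFn hg.sortedLE_ofFn h)

lemma anti_unique {n : ℕ} {f g : Fin n → ℝ} (hf : Antitone f) (hg : Antitone g)
    (h : Finset.univ.val.map f = Finset.univ.val.map g) : f = g := by
  have hf' : Monotone (f ∘ Fin.revPerm) := fun i j hij => hf (Fin.rev_le_rev.mpr hij)
  have hg' : Monotone (g ∘ Fin.revPerm) := fun i j hij => hg (Fin.rev_le_rev.mpr hij)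
  have h2 := mono_unique hf' hg'
    (by rw [show f ∘ Fin.revPerm = f ∘ (Fin.revPerm : Equiv.Perm (Fin n)) from rfl,
      mset_comp_perm, mset_comp_perm]; exact h)
  funext i
  have h3 := congrFun h2 i.rev
  simpa using h3

lemma dsort_spec {n : ℕ} {g f : Fin n → ℝ} (hf : Antitone f)
    (h : Finset.univ.val.map f = Finset.univ.val.map g) : dsort g = f :=
  anti_unique (antitone_dsort g) hf ((mset_dsort g).trans h.symm)

lemma dsort_mem {n : ℕ} (g : Fin n → ℝ) (i : Fin n) : ∃ j, dsort g i = g j := by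
  have h : dsort g i ∈ Finset.univ.val.map g := by
    rw [← mset_dsort]
    exact Multiset.mem_map_of_mem _ (Finset.mem_univ i)
  obtain ⟨j, _, hj⟩ := Multiset.mem_map.mp h
  exact ⟨j, hj.symm⟩

lemma mem_dsort {n : ℕ} (g : Fin n → ℝ) (j : Fin n) : ∃ i, g j = dsort g i := by
  have h : g j ∈ Finset.univ.val.map (dsort g) := by
    rw [mset_dsort]
    exact Multiset.mem_map_of_mem _ (Finset.mem_univ j)
  obtain ⟨i, _, hi⟩ := Multiset.mem_map.mp h
  exact ⟨i, hi.symm⟩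

lemma dsort_nonneg {n : ℕ} {g : Fin n → ℝ} (hg : ∀ j, 0 ≤ g j) (i : Fin n) : 0 ≤ dsort g i := by
  obtain ⟨j, hj⟩ := dsort_mem g i
  rw [hj]; exact hg j

lemma dsort_last_le {n : ℕ} (hn : 0 < n) (g : Fin n → ℝ) (j : Fin n) :
    dsort g ⟨n - 1, by omega⟩ ≤ g j := by
  obtain ⟨i, hi⟩ := mem_dsort g j
  rw [hi]
  exact antitone_dsort g (by simp only [Fin.le_def]; omega)

lemma le_dsort_zero {n : ℕ} (hn : 0 < n) (g : Fin n → ℝ) (j : Fin n) :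
    g j ≤ dsort g ⟨0, hn⟩ := by
  obtain ⟨i, hi⟩ := mem_dsort g j
  rw [hi]
  exact antitone_dsort g (by simp only [Fin.le_def]; omega)

/-! ### Fin.append -/

lemma append_apply_left {α : Type*} {k m : ℕ} (a : Fin k → α) (b : Fin m → α)
    (i : Fin (k + m)) (h : (i : ℕ) < k) : Fin.append a b i = a ⟨i, h⟩ := by
  exact Fin.append_left a b ⟨i, h⟩

lemma append_apply_right {α : Type*} {k m : ℕ} (a : Fin k → α) (b : Fin m → α)
    (i : Fin (k + m)) (h : k ≤ (i : ℕ)) : Fin.append a b i = b ⟨i - k, by omega⟩ := by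
  obtain ⟨iv, hlt⟩ := i
  have h' : k ≤ iv := h
  obtain ⟨j, rfl⟩ : ∃ j, iv = k + j := ⟨iv - k, by omega⟩
  show Fin.append a b (Fin.natAdd k ⟨j, by omega⟩) = _
  rw [Fin.append_right]
  exact congrArg b (Fin.ext (by simp))


lemma antitone_append {k m : ℕ} {a : Fin k → ℝ} {b : Fin m → ℝ}
    (ha : Antitone a) (hb : Antitone b) (hab : ∀ i j, b j ≤ a i) :
    Antitone (Fin.append a b) := by
  intro i j hij
  have hij' : (i : ℕ) ≤ (j : ℕ) := hij
  rcases Nat.lt_or_ge (i : ℕ) k with hi | hi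
  · rcases Nat.lt_or_ge (j : ℕ) k with hj | hj
    · rw [append_apply_left a b i hi, append_apply_left a b j hj]
      exact ha (by simp only [Fin.le_def]; exact hij')
    · rw [append_apply_left a b i hi, append_apply_right a b j hj]
      exact hab _ _
  · have hj : k ≤ (j : ℕ) := le_trans hi hij'
    rw [append_apply_right a b i hi, append_apply_right a b j hj]
    exact hb (by simp only [Fin.le_def]; omega)

lemma mset_append {α : Type*} {k m : ℕ} (a : Fin k → α) (b : Fin m → α) :
    Finset.univ.val.map (Fin.append a b) = Finset.univ.val.map a + Finset.univ.val.map b := by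
  rw [mset_univ_map_eq_ofFn, mset_univ_map_eq_ofFn, mset_univ_map_eq_ofFn,
    List.ofFn_fin_append]
  rfl

/-! ### Charpoly and eigenvalue multisets -/

lemma charpoly_conj {n : ℕ} (U D : Matrix (Fin n) (Fin n) ℂ)
    (hU : U ∈ Matrix.unitaryGroup (Fin n) ℂ) :
    (U * D * star U).charpoly = D.charpoly := by
  have hUV : U * star U = 1 := Matrix.mem_unitaryGroup_iff.mp hU
  have hVU : star U * U = 1 := Matrix.mem_unitaryGroup_iff'.mp hU
  set φ := (Polynomial.C : ℂ →+* ℂ[X]).mapMatrix (m := Fin n) with hφ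
  have key : Matrix.charmatrix (U * D * star U) = φ U * Matrix.charmatrix D * φ (star U) := by
    show Matrix.scalar (Fin n) (X : ℂ[X]) - φ (U * D * star U)
      = φ U * (Matrix.scalar (Fin n) (X : ℂ[X]) - φ D) * φ (star U)
    rw [mul_sub, sub_mul, _root_.map_mul, _root_.map_mul]
    congr 1
    have hc : Matrix.scalar (Fin n) (X : ℂ[X]) * φ U = φ U * Matrix.scalar (Fin n) (X : ℂ[X]) :=
      (Matrix.scalar_commute (X : ℂ[X]) (fun r => Commute.all _ _) (φ U)).eq
    rw [← hc, mul_assoc, ← _root_.map_mul, hUV, _root_.map_one, mul_one]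
  show (Matrix.charmatrix (U * D * star U)).det = (Matrix.charmatrix D).det
  rw [key, Matrix.det_mul, Matrix.det_mul]
  have hdet : (φ U).det * (φ (star U)).det = 1 := by
    rw [← Matrix.det_mul, ← _root_.map_mul, hUV, _root_.map_one, Matrix.det_one]
  rw [mul_right_comm, hdet, one_mul]

lemma charpoly_diagonal {n : ℕ} (d : Fin n → ℂ) :
    (Matrix.diagonal d).charpoly = ∏ i, (X - Polynomial.C (d i)) := by
  have h : Matrix.charmatrix (Matrix.diagonal d)
      = Matrix.diagonal fun i => (X - Polynomial.C (d i)) := by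
    ext i j
    by_cases hij : i = j
    · subst hij; simp
    · rw [Matrix.charmatrix_apply_ne _ _ _ hij, Matrix.diagonal_apply_ne _ hij,
        Matrix.diagonal_apply_ne _ hij, map_zero, neg_zero]
  show (Matrix.charmatrix (Matrix.diagonal d)).det = _
  rw [h, Matrix.det_diagonal]

lemma hermitian_charpoly {n : ℕ} {A : Matrix (Fin n) (Fin n) ℂ} (hA : A.IsHermitian) :
    A.charpoly = ∏ i, (X - Polynomial.C ((hA.eigenvalues i : ℝ) : ℂ)) := by
  conv_lhs => rw [hA.spectral_theorem, Unitary.conjStarAlgAut_apply]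
  rw [charpoly_conj _ _ hA.eigenvectorUnitary.2, charpoly_diagonal]
  rfl

lemma roots_charpoly {n : ℕ} {A : Matrix (Fin n) (Fin n) ℂ} (hA : A.IsHermitian) :
    A.charpoly.roots = (Finset.univ.val.map hA.eigenvalues).map (fun r : ℝ => (r : ℂ)) := by
  rw [hermitian_charpoly hA, Finset.prod_eq_multiset_prod]
  have h1 : Multiset.map (fun i => X - Polynomial.C ((hA.eigenvalues i : ℝ) : ℂ)) Finset.univ.val
      = Multiset.map (fun a : ℂ => X - Polynomial.C a)
          (Finset.univ.val.map (fun i => ((hA.eigenvalues i : ℝ) : ℂ))) := by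
    rw [Multiset.map_map]
    rfl
  rw [h1, Polynomial.roots_multiset_prod_X_sub_C, Multiset.map_map]
  rfl

lemma eigs_congr {n : ℕ} {A B : Matrix (Fin n) (Fin n) ℂ} (hA : A.IsHermitian)
    (hB : B.IsHermitian) (h : A = B) : hA.eigenvalues = hB.eigenvalues := by
  subst h; rfl

lemma mset_eigs_eq_of_charpoly {n : ℕ} {A : Matrix (Fin n) (Fin n) ℂ} (hA : A.IsHermitian)
    (w : Fin n → ℝ) (h : A.charpoly = ∏ i, (X - Polynomial.C ((w i : ℝ) : ℂ))) :
    Finset.univ.val.map hA.eigenvalues = Finset.univ.val.map w := by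
  apply Multiset.map_injective (f := fun r : ℝ => (r : ℂ)) Complex.ofReal_injective
  have h1 : Multiset.map (fun i => X - Polynomial.C ((w i : ℝ) : ℂ)) Finset.univ.val
      = Multiset.map (fun a : ℂ => X - Polynomial.C a)
          (Finset.univ.val.map (fun i => ((w i : ℝ) : ℂ))) := by
    rw [Multiset.map_map]
    rfl
  have h2 : Multiset.map (fun r : ℝ => (r : ℂ)) (Finset.univ.val.map hA.eigenvalues)
      = A.charpoly.roots := (roots_charpoly hA).symm
  rw [h2, h, Finset.prod_eq_multiset_prod, h1, Polynomial.roots_multiset_prod_X_sub_C,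
    Multiset.map_map]
  rfl

lemma charpoly_monic_ne_zero {n : ℕ} (A : Matrix (Fin n) (Fin n) ℂ) : A.charpoly ≠ 0 :=
  (Matrix.charpoly_monic A).ne_zero

lemma mset_eigs_block {k m : ℕ} {P : Matrix (Fin k) (Fin k) ℂ} {Q : Matrix (Fin m) (Fin m) ℂ}
    (hP : P.IsHermitian) (hQ : Q.IsHermitian) (hB : (bd P Q).IsHermitian) :
    Finset.univ.val.map hB.eigenvalues
      = Finset.univ.val.map hP.eigenvalues + Finset.univ.val.map hQ.eigenvalues := by
  apply Multiset.map_injective (f := fun r : ℝ => (r : ℂ)) Complex.ofReal_injective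
  rw [Multiset.map_add, ← roots_charpoly hP, ← roots_charpoly hQ, ← roots_charpoly hB]
  have hcp : (bd P Q).charpoly = P.charpoly * Q.charpoly := by
    rw [bd, Matrix.charpoly_reindex, Matrix.charpoly_fromBlocks_zero₁₂]
  rw [hcp, Polynomial.roots_mul (mul_ne_zero (charpoly_monic_ne_zero P) (charpoly_monic_ne_zero Q))]

end KF

end KFAux
section KFAux2
open Polynomial
namespace KF

/-! ### Block diagonal algebra -/

lemma bd_conjTranspose_mul {k m : ℕ} (P : Matrix (Fin k) (Fin k) ℂ)
    (Q : Matrix (Fin m) (Fin m) ℂ) :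
    (bd P Q)ᴴ * (bd P Q) = bd (Pᴴ * P) (Qᴴ * Q) := by
  simp only [bd, Matrix.reindex_apply, Matrix.conjTranspose_submatrix,
    Matrix.submatrix_mul_equiv, Matrix.fromBlocks_conjTranspose, Matrix.fromBlocks_multiply]
  simp

lemma bd_add {k m : ℕ} (P P' : Matrix (Fin k) (Fin k) ℂ) (Q Q' : Matrix (Fin m) (Fin m) ℂ) :
    bd P Q + bd P' Q' = bd (P + P') (Q + Q') := by
  have h : (Matrix.fromBlocks P 0 0 Q) + (Matrix.fromBlocks P' 0 0 Q')
      = Matrix.fromBlocks (P + P') 0 0 (Q + Q') := by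
    rw [Matrix.fromBlocks_add]
    norm_num
  simp only [bd, Matrix.reindex_apply]
  rw [show (Matrix.fromBlocks P 0 0 Q).submatrix ⇑finSumFinEquiv.symm ⇑finSumFinEquiv.symm
      + (Matrix.fromBlocks P' 0 0 Q').submatrix ⇑finSumFinEquiv.symm ⇑finSumFinEquiv.symm
    = ((Matrix.fromBlocks P 0 0 Q) + (Matrix.fromBlocks P' 0 0 Q')).submatrix
        ⇑finSumFinEquiv.symm ⇑finSumFinEquiv.symm from rfl, h]

/-! ### Quadratic forms and eigenvalue bounds -/

lemma dot_eigenvector {n : ℕ} {A : Matrix (Fin n) (Fin n) ℂ} (hA : A.IsHermitian) (i : Fin n) :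
    dotProduct (star ⇑(hA.eigenvectorBasis i)) ⇑(hA.eigenvectorBasis i) = 1 := by
  have h := hA.eigenvectorBasis.orthonormal.1 i
  have h2 : (inner ℂ (hA.eigenvectorBasis i) (hA.eigenvectorBasis i) : ℂ)
      = dotProduct (star ⇑(hA.eigenvectorBasis i)) ⇑(hA.eigenvectorBasis i) :=
    (EuclideanSpace.inner_eq_star_dotProduct _ _).trans (dotProduct_comm _ _)
  rw [inner_self_eq_norm_sq_to_K, h] at h2
  simpa using h2.symm

noncomputable def nvec {m : ℕ} (v : Fin m → ℂ) : ℝ := ∑ i, Complex.normSq (v i)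

lemma nvec_nonneg {m : ℕ} (v : Fin m → ℂ) : 0 ≤ nvec v :=
  Finset.sum_nonneg fun i _ => Complex.normSq_nonneg _

lemma dot_self_eq_nvec {m : ℕ} (v : Fin m → ℂ) :
    dotProduct (star v) v = (nvec v : ℂ) := by
  simp only [dotProduct, Pi.star_apply, nvec]
  push_cast
  apply Finset.sum_congr rfl
  intro i _
  rw [Complex.normSq_eq_conj_mul_self]
  rfl

lemma sqrt_nvec_add_le {m : ℕ} (v w : Fin m → ℂ) :
    Real.sqrt (nvec (v + w)) ≤ Real.sqrt (nvec v) + Real.sqrt (nvec w) := by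
  have key : ∀ u : Fin m → ℂ, Real.sqrt (nvec u) = ‖(WithLp.equiv 2 (Fin m → ℂ)).symm u‖ := by
    intro u
    rw [EuclideanSpace.norm_eq]
    congr 1
    apply Finset.sum_congr rfl
    intro i _
    rw [← Complex.sq_norm]
    rfl
  rw [key, key, key]
  have h : (WithLp.equiv 2 (Fin m → ℂ)).symm (v + w)
      = (WithLp.equiv 2 (Fin m → ℂ)).symm v + (WithLp.equiv 2 (Fin m → ℂ)).symm w := rfl
  rw [h]
  exact norm_add_le _ _

lemma dot_conjTranspose_mul {m : ℕ} (M : Matrix (Fin m) (Fin m) ℂ) (v : Fin m → ℂ) :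
    dotProduct (star v) ((Mᴴ * M) *ᵥ v) = (nvec (M *ᵥ v) : ℂ) := by
  rw [← Matrix.mulVec_mulVec, Matrix.dotProduct_mulVec, ← Matrix.star_mulVec,
    dot_self_eq_nvec]

lemma real_smul_vec {m : ℕ} (r : ℝ) (v : Fin m → ℂ) : r • v = (r : ℂ) • v := by
  funext i
  simp [Complex.real_smul]

/-- If all eigenvalues are `≤ c` then `c•1 - A` is psd. -/
lemma psd_of_eigs_le {n : ℕ} {A : Matrix (Fin n) (Fin n) ℂ} (hA : A.IsHermitian) {c : ℝ}
    (h : ∀ i, hA.eigenvalues i ≤ c) :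
    (((c : ℂ) • 1 : Matrix (Fin n) (Fin n) ℂ) - A).PosSemidef := by
  set U : Matrix (Fin n) (Fin n) ℂ := ↑hA.eigenvectorUnitary with hU
  have hUU : U * star U = 1 := Matrix.mem_unitaryGroup_iff.mp hA.eigenvectorUnitary.2
  have hrep : ((c : ℂ) • 1 : Matrix (Fin n) (Fin n) ℂ) - A
      = U * Matrix.diagonal (fun i => ((c - hA.eigenvalues i : ℝ) : ℂ)) * star U := by
    have h1 : Matrix.diagonal (fun i => ((c - hA.eigenvalues i : ℝ) : ℂ))
        = (c : ℂ) • (1 : Matrix (Fin n) (Fin n) ℂ)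
          - Matrix.diagonal (RCLike.ofReal ∘ hA.eigenvalues) := by
      rw [← Matrix.diagonal_one, ← Matrix.diagonal_smul, Matrix.diagonal_sub]
      congr 1
      funext i
      push_cast
      simp
    rw [h1, mul_sub, sub_mul, Matrix.mul_smul, Matrix.smul_mul, mul_one, hUU]
    conv_lhs => rw [hA.spectral_theorem, Unitary.conjStarAlgAut_apply]
  rw [hrep, Matrix.star_eq_conjTranspose]
  exact Matrix.PosSemidef.mul_mul_conjTranspose_same
    (Matrix.PosSemidef.diagonal fun i => Complex.zero_le_real.mpr (by linarith [h i])) _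

/-- If all eigenvalues are `≥ c` then `A - c•1` is psd. -/
lemma psd_of_le_eigs {n : ℕ} {A : Matrix (Fin n) (Fin n) ℂ} (hA : A.IsHermitian) {c : ℝ}
    (h : ∀ i, c ≤ hA.eigenvalues i) :
    (A - ((c : ℂ) • 1 : Matrix (Fin n) (Fin n) ℂ)).PosSemidef := by
  set U : Matrix (Fin n) (Fin n) ℂ := ↑hA.eigenvectorUnitary with hU
  have hUU : U * star U = 1 := Matrix.mem_unitaryGroup_iff.mp hA.eigenvectorUnitary.2
  have hrep : A - ((c : ℂ) • 1 : Matrix (Fin n) (Fin n) ℂ)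
      = U * Matrix.diagonal (fun i => ((hA.eigenvalues i - c : ℝ) : ℂ)) * star U := by
    have h1 : Matrix.diagonal (fun i => ((hA.eigenvalues i - c : ℝ) : ℂ))
        = Matrix.diagonal (RCLike.ofReal ∘ hA.eigenvalues)
          - (c : ℂ) • (1 : Matrix (Fin n) (Fin n) ℂ) := by
      rw [← Matrix.diagonal_one, ← Matrix.diagonal_smul, Matrix.diagonal_sub]
      congr 1
      funext i
      push_cast
      simp
    rw [h1, mul_sub, sub_mul, Matrix.mul_smul, Matrix.smul_mul, mul_one, hUU]
    conv_lhs => rw [hA.spectral_theorem, Unitary.conjStarAlgAut_apply]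
  rw [hrep, Matrix.star_eq_conjTranspose]
  exact Matrix.PosSemidef.mul_mul_conjTranspose_same
    (Matrix.PosSemidef.diagonal fun i => Complex.zero_le_real.mpr (by linarith [h i])) _

lemma mulVec_smul_one_sub {n : ℕ} (A : Matrix (Fin n) (Fin n) ℂ) (c : ℂ) (v : Fin n → ℂ) :
    (((c • 1 : Matrix (Fin n) (Fin n) ℂ) - A)) *ᵥ v = c • v - A *ᵥ v := by
  rw [Matrix.sub_mulVec, Matrix.smul_mulVec, Matrix.one_mulVec]

lemma eigs_le_of_psd {n : ℕ} {A : Matrix (Fin n) (Fin n) ℂ} (hA : A.IsHermitian) {c : ℝ}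
    (h : (((c : ℂ) • 1 : Matrix (Fin n) (Fin n) ℂ) - A).PosSemidef) (i : Fin n) :
    hA.eigenvalues i ≤ c := by
  have h2 := h.dotProduct_mulVec_nonneg ⇑(hA.eigenvectorBasis i)
  rw [mulVec_smul_one_sub, hA.mulVec_eigenvectorBasis, real_smul_vec, ← sub_smul,
    dotProduct_smul, dot_eigenvector, smul_eq_mul, mul_one] at h2
  have h3 : (0 : ℂ) ≤ (((c - hA.eigenvalues i : ℝ)) : ℂ) := by
    convert h2 using 2
    push_cast
    ring
  have := Complex.zero_le_real.mp h3
  linarith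

lemma le_eigs_of_psd {n : ℕ} {A : Matrix (Fin n) (Fin n) ℂ} (hA : A.IsHermitian) {c : ℝ}
    (h : (A - ((c : ℂ) • 1 : Matrix (Fin n) (Fin n) ℂ)).PosSemidef) (i : Fin n) :
    c ≤ hA.eigenvalues i := by
  have h2 := h.dotProduct_mulVec_nonneg ⇑(hA.eigenvectorBasis i)
  rw [Matrix.sub_mulVec, Matrix.smul_mulVec, Matrix.one_mulVec,
    hA.mulVec_eigenvectorBasis, real_smul_vec, ← sub_smul,
    dotProduct_smul, dot_eigenvector, smul_eq_mul, mul_one] at h2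
  have h3 : (0 : ℂ) ≤ (((hA.eigenvalues i - c : ℝ)) : ℂ) := by
    convert h2 using 2
    push_cast
    ring
  have := Complex.zero_le_real.mp h3
  linarith

end KF
end KFAux2
section KFAux3
open Polynomial
namespace KF

/-! ### singular value functions -/

noncomputable def lams {m : ℕ} (M : Matrix (Fin m) (Fin m) ℂ) : Fin m → ℝ :=
  dsort (Matrix.isHermitian_conjTranspose_mul_self M).eigenvalues

lemma sv_eq_sqrt_lams {m : ℕ} (M : Matrix (Fin m) (Fin m) ℂ) (i : Fin m) :
    sv M i = Real.sqrt (lams M i) := rfl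

lemma lams_nonneg {m : ℕ} (M : Matrix (Fin m) (Fin m) ℂ) (i : Fin m) : 0 ≤ lams M i :=
  dsort_nonneg (fun j => Matrix.eigenvalues_conjTranspose_mul_self_nonneg M j) i

lemma svN_eq_sqrt_lams {m : ℕ} (M : Matrix (Fin m) (Fin m) ℂ) (j : ℕ) (hj : j < m) :
    svN M j = Real.sqrt (lams M ⟨j, hj⟩) := by
  rw [svN, dif_pos hj]
  rfl

lemma svN_nonneg {m : ℕ} (M : Matrix (Fin m) (Fin m) ℂ) (j : ℕ) : 0 ≤ svN M j := by
  rw [svN]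
  split
  · exact Real.sqrt_nonneg _
  · exact le_refl 0

/-- λmax quadratic form bound -/
lemma nvec_mulVec_le {m : ℕ} (hm : 0 < m) (M : Matrix (Fin m) (Fin m) ℂ) (v : Fin m → ℂ) :
    nvec (M *ᵥ v) ≤ lams M ⟨0, hm⟩ * nvec v := by
  set c := lams M ⟨0, hm⟩ with hc
  have hle : ∀ i, (Matrix.isHermitian_conjTranspose_mul_self M).eigenvalues i ≤ c :=
    fun i => le_dsort_zero hm _ i
  have hpsd := psd_of_eigs_le (Matrix.isHermitian_conjTranspose_mul_self M) hle
  have h2 := hpsd.dotProduct_mulVec_nonneg v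
  rw [mulVec_smul_one_sub, dotProduct_sub, dotProduct_smul,
    dot_self_eq_nvec, dot_conjTranspose_mul, smul_eq_mul] at h2
  have h3 : (0 : ℂ) ≤ ((c * nvec v - nvec (M *ᵥ v) : ℝ) : ℂ) := by
    convert h2 using 2
    push_cast
    ring
  have := Complex.zero_le_real.mp h3
  linarith

lemma lam_zero_le {m : ℕ} (hm : 0 < m) (M : Matrix (Fin m) (Fin m) ℂ) {c : ℝ}
    (h : ∀ v, nvec (M *ᵥ v) ≤ c * nvec v) : lams M ⟨0, hm⟩ ≤ c := by
  set hH := Matrix.isHermitian_conjTranspose_mul_self M with hHdef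
  obtain ⟨j, hj⟩ := dsort_mem hH.eigenvalues ⟨0, hm⟩
  have hv := h ⇑(hH.eigenvectorBasis j)
  have h1 : nvec ⇑(hH.eigenvectorBasis j) = 1 := by
    have hd := dot_self_eq_nvec ⇑(hH.eigenvectorBasis j)
    rw [dot_eigenvector] at hd
    exact_mod_cast hd.symm
  have h2 : nvec (M *ᵥ ⇑(hH.eigenvectorBasis j)) = hH.eigenvalues j := by
    have hd : (nvec (M *ᵥ ⇑(hH.eigenvectorBasis j)) : ℂ)
        = ((hH.eigenvalues j : ℝ) : ℂ) := by
      rw [← dot_conjTranspose_mul, hH.mulVec_eigenvectorBasis, real_smul_vec,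
        dotProduct_smul, dot_eigenvector, smul_eq_mul, mul_one]
    exact_mod_cast hd
  rw [h1, mul_one, h2] at hv
  rw [show lams M ⟨0, hm⟩ = dsort hH.eigenvalues ⟨0, hm⟩ from rfl, hj]
  exact hv

lemma mulVec_sqrt_bound {m : ℕ} (hm : 0 < m) (M : Matrix (Fin m) (Fin m) ℂ) (v : Fin m → ℂ) :
    Real.sqrt (nvec (M *ᵥ v)) ≤ svN M 0 * Real.sqrt (nvec v) := by
  rw [svN_eq_sqrt_lams M 0 hm]
  calc Real.sqrt (nvec (M *ᵥ v)) ≤ Real.sqrt (lams M ⟨0, hm⟩ * nvec v) :=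
        Real.sqrt_le_sqrt (nvec_mulVec_le hm M v)
    _ = Real.sqrt (lams M ⟨0, hm⟩) * Real.sqrt (nvec v) :=
        Real.sqrt_mul (lams_nonneg M _) _

/-- Triangle inequality for the largest singular value. -/
lemma svN_zero_add_le {m : ℕ} (hm : 0 < m) (B C : Matrix (Fin m) (Fin m) ℂ) :
    svN (B + C) 0 ≤ svN B 0 + svN C 0 := by
  have hBC : 0 ≤ svN B 0 + svN C 0 := add_nonneg (svN_nonneg B 0) (svN_nonneg C 0)
  have key : ∀ v, nvec ((B + C) *ᵥ v) ≤ (svN B 0 + svN C 0) ^ 2 * nvec v := by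
    intro v
    have h1 : Real.sqrt (nvec ((B + C) *ᵥ v))
        ≤ (svN B 0 + svN C 0) * Real.sqrt (nvec v) := by
      rw [Matrix.add_mulVec]
      calc Real.sqrt (nvec (B *ᵥ v + C *ᵥ v))
          ≤ Real.sqrt (nvec (B *ᵥ v)) + Real.sqrt (nvec (C *ᵥ v)) := sqrt_nvec_add_le _ _
        _ ≤ svN B 0 * Real.sqrt (nvec v) + svN C 0 * Real.sqrt (nvec v) :=
            add_le_add (mulVec_sqrt_bound hm B v) (mulVec_sqrt_bound hm C v)
        _ = (svN B 0 + svN C 0) * Real.sqrt (nvec v) := by ring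
    have h2 : nvec ((B + C) *ᵥ v) = Real.sqrt (nvec ((B + C) *ᵥ v)) ^ 2 :=
      (Real.sq_sqrt (nvec_nonneg _)).symm
    rw [h2]
    calc Real.sqrt (nvec ((B + C) *ᵥ v)) ^ 2
        ≤ ((svN B 0 + svN C 0) * Real.sqrt (nvec v)) ^ 2 := by
          apply pow_le_pow_left₀ (Real.sqrt_nonneg _) h1
      _ = (svN B 0 + svN C 0) ^ 2 * nvec v := by
          rw [mul_pow, Real.sq_sqrt (nvec_nonneg v)]
  have hlam := lam_zero_le hm (B + C) key
  rw [svN_eq_sqrt_lams (B + C) 0 hm]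
  calc Real.sqrt (lams (B + C) ⟨0, hm⟩) ≤ Real.sqrt ((svN B 0 + svN C 0) ^ 2) :=
        Real.sqrt_le_sqrt hlam
    _ = svN B 0 + svN C 0 := Real.sqrt_sq hBC

/-! ### psd facts -/

lemma lams_psd {n : ℕ} {P : Matrix (Fin n) (Fin n) ℂ} (hP : P.PosSemidef) :
    lams P = fun i => (dsort hP.1.eigenvalues i) ^ 2 := by
  apply dsort_spec
  · intro i j hij
    have h1 := antitone_dsort hP.1.eigenvalues hij
    have h2 : 0 ≤ dsort hP.1.eigenvalues j := dsort_nonneg (fun j => hP.eigenvalues_nonneg j) j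
    exact pow_le_pow_left₀ h2 h1 2
  · have hmul : Pᴴ * P = P * P := by rw [hP.1]
    have hPP : (P * P).IsHermitian := by rw [← hmul]; exact Matrix.isHermitian_conjTranspose_mul_self P
    have hchar : (P * P).charpoly = ∏ i, (X - Polynomial.C (((hP.1.eigenvalues i) ^ 2 : ℝ) : ℂ)) := by
      set U : Matrix (Fin n) (Fin n) ℂ := ↑hP.1.eigenvectorUnitary with hUdef
      have hVU : star U * U = 1 := Matrix.mem_unitaryGroup_iff'.mp hP.1.eigenvectorUnitary.2
      have hrep : P * P
          = U * Matrix.diagonal (fun i => (((hP.1.eigenvalues i) ^ 2 : ℝ) : ℂ)) * star U := by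
        conv_lhs => rw [hP.1.spectral_theorem, Unitary.conjStarAlgAut_apply]
        rw [show ∀ (D : Matrix (Fin n) (Fin n) ℂ), U * D * star U * (U * D * star U)
            = U * (D * (star U * U) * D) * star U from fun D => by
          simp only [mul_assoc], hVU]
        rw [mul_one, Matrix.diagonal_mul_diagonal]
        congr 2
        funext i
        push_cast
        simp [pow_two]
      rw [hrep, charpoly_conj _ _ hP.1.eigenvectorUnitary.2, charpoly_diagonal]
    have hmset := mset_eigs_eq_of_charpoly
      (Matrix.isHermitian_conjTranspose_mul_self P) (fun i => (hP.1.eigenvalues i) ^ 2)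
      (by rw [hmul]; exact hchar)
    rw [show Finset.univ.val.map (fun i => dsort hP.1.eigenvalues i ^ 2)
        = Multiset.map (fun x : ℝ => x ^ 2) (Finset.univ.val.map (dsort hP.1.eigenvalues)) by
      rw [Multiset.map_map]; rfl]
    rw [mset_dsort]
    rw [show Multiset.map (fun x : ℝ => x ^ 2) (Finset.univ.val.map hP.1.eigenvalues)
        = Finset.univ.val.map (fun i => (hP.1.eigenvalues i) ^ 2) by
      rw [Multiset.map_map]; rfl]
    exact hmset.symm

lemma sv_psd {n : ℕ} {P : Matrix (Fin n) (Fin n) ℂ} (hP : P.PosSemidef) (i : Fin n) :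
    sv P i = dsort hP.1.eigenvalues i := by
  rw [sv_eq_sqrt_lams, lams_psd hP]
  exact Real.sqrt_sq (dsort_nonneg (fun j => hP.eigenvalues_nonneg j) i)

lemma sum_dsort {n : ℕ} (g : Fin n → ℝ) : ∑ i, dsort g i = ∑ i, g i := by
  rw [Finset.sum, Finset.sum, ← mset_dsort g]

lemma sum_sv_psd {n : ℕ} {P : Matrix (Fin n) (Fin n) ℂ} (hP : P.PosSemidef) :
    ∑ i, sv P i = ∑ i, hP.1.eigenvalues i := by
  calc ∑ i, sv P i = ∑ i, dsort hP.1.eigenvalues i :=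
        Finset.sum_congr rfl fun i _ => sv_psd hP i
    _ = ∑ i, hP.1.eigenvalues i := sum_dsort _

/-! ### trace -/

lemma sum_eigs_eq_trace {n : ℕ} {A : Matrix (Fin n) (Fin n) ℂ} (hA : A.IsHermitian) :
    ((∑ i, hA.eigenvalues i : ℝ) : ℂ) = A.trace := by
  conv_rhs => rw [hA.spectral_theorem, Unitary.conjStarAlgAut_apply]
  rw [Matrix.trace_mul_cycle,
    Matrix.mem_unitaryGroup_iff'.mp hA.eigenvectorUnitary.2, one_mul,
    Matrix.trace_diagonal]
  push_cast
  rfl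

lemma sum_eigs_add {n : ℕ} {A B : Matrix (Fin n) (Fin n) ℂ}
    (hA : A.IsHermitian) (hB : B.IsHermitian) (hAB : (A + B).IsHermitian) :
    ∑ i, hAB.eigenvalues i = ∑ i, hA.eigenvalues i + ∑ i, hB.eigenvalues i := by
  have h : ((∑ i, hAB.eigenvalues i : ℝ) : ℂ)
      = ((∑ i, hA.eigenvalues i + ∑ i, hB.eigenvalues i : ℝ) : ℂ) := by
    rw [sum_eigs_eq_trace hAB, Complex.ofReal_add, sum_eigs_eq_trace hA,
      sum_eigs_eq_trace hB, Matrix.trace_add]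
  exact_mod_cast h

end KF
end KFAux3
section KFAux4
open Polynomial
namespace KF

lemma kyFan_eq_sum {k m : ℕ} (M : Matrix (Fin (k + m)) (Fin (k + m)) ℂ) :
    kyFan k M = ∑ i : Fin k, sv M (Fin.castAdd m i) := by
  rw [kyFan, Finset.sum_filter, Fin.sum_univ_add]
  have h1 : ∀ j : Fin m,
      (if ((Fin.natAdd k j : Fin (k + m)) : ℕ) < k then sv M (Fin.natAdd k j) else 0) = 0 :=
    fun j => if_neg (by simp)
  rw [Finset.sum_congr rfl fun j _ => h1 j, Finset.sum_const_zero, add_zero]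
  apply Finset.sum_congr rfl
  intro i _
  rw [if_pos]
  simp [i.isLt]

/-- The master block lemma: the sorted squared singular values of `bd P Q` are
the concatenation, under the cone condition. -/
lemma lams_bd {k m : ℕ} (hk : 0 < k) (hm : 0 < m)
    (P : Matrix (Fin k) (Fin k) ℂ) (Q : Matrix (Fin m) (Fin m) ℂ)
    (hcond : lams Q ⟨0, hm⟩ ≤ lams P ⟨k - 1, by omega⟩) :
    lams (bd P Q) = Fin.append (lams P) (lams Q) := by
  apply dsort_spec
  · apply antitone_append (antitone_dsort _) (antitone_dsort _)
    intro i j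
    calc lams Q j ≤ lams Q ⟨0, hm⟩ := antitone_dsort _ (by simp [Fin.le_def])
      _ ≤ lams P ⟨k - 1, by omega⟩ := hcond
      _ ≤ lams P i := antitone_dsort _ (by simp only [Fin.le_def]; omega)
  · rw [mset_append,
      show lams P = dsort (Matrix.isHermitian_conjTranspose_mul_self P).eigenvalues from rfl,
      show lams Q = dsort (Matrix.isHermitian_conjTranspose_mul_self Q).eigenvalues from rfl,
      mset_dsort, mset_dsort]
    have hmat : (bd P Q)ᴴ * (bd P Q) = bd (Pᴴ * P) (Qᴴ * Q) := bd_conjTranspose_mul P Q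
    have hB : (bd (Pᴴ * P) (Qᴴ * Q)).IsHermitian := by
      rw [← hmat]; exact Matrix.isHermitian_conjTranspose_mul_self _
    rw [eigs_congr (Matrix.isHermitian_conjTranspose_mul_self (bd P Q)) hB hmat]
    exact (mset_eigs_block (Matrix.isHermitian_conjTranspose_mul_self P)
      (Matrix.isHermitian_conjTranspose_mul_self Q) hB).symm

lemma kyFan_bd {k m : ℕ} (hk : 0 < k) (hm : 0 < m)
    (P : Matrix (Fin k) (Fin k) ℂ) (Q : Matrix (Fin m) (Fin m) ℂ)
    (hcond : lams Q ⟨0, hm⟩ ≤ lams P ⟨k - 1, by omega⟩) :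
    kyFan k (bd P Q) = ∑ i : Fin k, sv P i := by
  rw [kyFan_eq_sum]
  apply Finset.sum_congr rfl
  intro i _
  rw [sv_eq_sqrt_lams, sv_eq_sqrt_lams, lams_bd hk hm P Q hcond, Fin.append_left]

/-- Convert the svN cone condition into the `lams` form. -/
lemma lams_cond_of_svN {k m : ℕ} (hk : 0 < k) (hm : 0 < m)
    (P : Matrix (Fin k) (Fin k) ℂ) (Q : Matrix (Fin m) (Fin m) ℂ)
    (h : svN Q 0 ≤ svN P (k - 1)) :
    lams Q ⟨0, hm⟩ ≤ lams P ⟨k - 1, by omega⟩ := by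
  rw [svN_eq_sqrt_lams Q 0 hm, svN_eq_sqrt_lams P (k - 1) (by omega)] at h
  have h1 : lams Q ⟨0, hm⟩ = Real.sqrt (lams Q ⟨0, hm⟩) ^ 2 :=
    (Real.sq_sqrt (lams_nonneg Q _)).symm
  rw [h1]
  calc Real.sqrt (lams Q ⟨0, hm⟩) ^ 2 ≤ Real.sqrt (lams P ⟨k - 1, by omega⟩) ^ 2 :=
        pow_le_pow_left₀ (Real.sqrt_nonneg _) h 2
    _ = lams P ⟨k - 1, by omega⟩ := Real.sq_sqrt (lams_nonneg P _)

lemma svN_psd_last {k : ℕ} (hk : 0 < k) {P : Matrix (Fin k) (Fin k) ℂ} (hP : P.PosSemidef) :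
    svN P (k - 1) = dsort hP.1.eigenvalues ⟨k - 1, by omega⟩ := by
  rw [svN, dif_pos (by omega : k - 1 < k), sv_psd hP]

/-- Superadditivity of the smallest eigenvalue for psd matrices. -/
lemma lamin_add {n : ℕ} (hn : 0 < n) {P A : Matrix (Fin n) (Fin n) ℂ}
    (hP : P.PosSemidef) (hA : A.PosSemidef) (hPA : (P + A).PosSemidef) :
    dsort hP.1.eigenvalues ⟨n - 1, by omega⟩ + dsort hA.1.eigenvalues ⟨n - 1, by omega⟩
      ≤ dsort hPA.1.eigenvalues ⟨n - 1, by omega⟩ := by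
  set cP := dsort hP.1.eigenvalues ⟨n - 1, by omega⟩ with hcP
  set cA := dsort hA.1.eigenvalues ⟨n - 1, by omega⟩ with hcA
  have h1 : (P - ((cP : ℂ) • 1 : Matrix (Fin n) (Fin n) ℂ)).PosSemidef :=
    psd_of_le_eigs hP.1 (fun j => dsort_last_le hn _ j)
  have h2 : (A - ((cA : ℂ) • 1 : Matrix (Fin n) (Fin n) ℂ)).PosSemidef :=
    psd_of_le_eigs hA.1 (fun j => dsort_last_le hn _ j)
  have h3 : ((P + A) - (((cP + cA : ℝ) : ℂ) • 1 : Matrix (Fin n) (Fin n) ℂ)).PosSemidef := by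
    have h4 := h1.add h2
    have h5 : (P - (cP : ℂ) • 1) + (A - (cA : ℂ) • 1)
        = (P + A) - ((cP + cA : ℝ) : ℂ) • (1 : Matrix (Fin n) (Fin n) ℂ) := by
      push_cast
      rw [add_smul]
      abel
    rwa [h5] at h4
  have h6 := le_eigs_of_psd hPA.1 h3
  obtain ⟨j, hj⟩ := dsort_mem hPA.1.eigenvalues ⟨n - 1, by omega⟩
  rw [hj]
  exact h6 j

end KF
end KFAux4
theorem stmt10 (k m : ℕ) (hk : 1 < k) (hm : 0 < m)
    (X : Matrix (Fin (k + m)) (Fin (k + m)) ℂ) (hX : X ∈ CC k m)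
    (A₁ : Matrix (Fin k) (Fin k) ℂ) (A₂ : Matrix (Fin m) (Fin m) ℂ)
    (hA₁ : A₁.PosDef) (hA : svN A₂ 0 < svN A₁ (k - 1)) :
    KFParallel k X (bd A₁ A₂) := by
  obtain ⟨X₁, X₂, rfl, hX₁, hc⟩ := hX
  have hk0 : 0 < k := by omega
  have hA₁p : A₁.PosSemidef := hA₁.posSemidef
  have hXA₁ : (X₁ + A₁).PosSemidef := hX₁.add hA₁p
  refine ⟨1, by simp, ?_⟩
  rw [one_smul, KF.bd_add]
  -- cone conditions in lams form
  have hcondX := KF.lams_cond_of_svN hk0 hm X₁ X₂ hc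
  have hcondA := KF.lams_cond_of_svN hk0 hm A₁ A₂ hA.le
  -- cone condition for the sum
  have hcondXA : svN (X₂ + A₂) 0 ≤ svN (X₁ + A₁) (k - 1) := by
    calc svN (X₂ + A₂) 0 ≤ svN X₂ 0 + svN A₂ 0 := KF.svN_zero_add_le hm X₂ A₂
      _ ≤ svN X₁ (k - 1) + svN A₁ (k - 1) := add_le_add hc hA.le
      _ = KF.dsort hX₁.1.eigenvalues ⟨k - 1, by omega⟩
          + KF.dsort hA₁p.1.eigenvalues ⟨k - 1, by omega⟩ := by
          rw [KF.svN_psd_last hk0 hX₁, KF.svN_psd_last hk0 hA₁p]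
      _ ≤ KF.dsort hXA₁.1.eigenvalues ⟨k - 1, by omega⟩ := KF.lamin_add hk0 hX₁ hA₁p hXA₁
      _ = svN (X₁ + A₁) (k - 1) := (KF.svN_psd_last hk0 hXA₁).symm
  have hcondXA' := KF.lams_cond_of_svN hk0 hm (X₁ + A₁) (X₂ + A₂) hcondXA
  -- Ky-Fan values
  have e1 : kyFan k (bd X₁ X₂) = ∑ i, hX₁.1.eigenvalues i := by
    rw [KF.kyFan_bd hk0 hm X₁ X₂ hcondX, KF.sum_sv_psd hX₁]
  have e2 : kyFan k (bd A₁ A₂) = ∑ i, hA₁p.1.eigenvalues i := by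
    rw [KF.kyFan_bd hk0 hm A₁ A₂ hcondA, KF.sum_sv_psd hA₁p]
  have e3 : kyFan k (bd (X₁ + A₁) (X₂ + A₂)) = ∑ i, hXA₁.1.eigenvalues i := by
    rw [KF.kyFan_bd hk0 hm _ _ hcondXA', KF.sum_sv_psd hXA₁]
  rw [e1, e2, e3]
  exact KF.sum_eigs_add hX₁.1 hA₁p.1 hXA₁.1
end

section
/- For a matrix X ∈ 𝒞 (the cone of block matrices X₁ ⊕ X₂ with X₁ psd and s_k(X₁) ≥ s₁(X₂)), membership in 𝒞 is equivalent to: X₁ is positive semidefinite and ‖X‖₍ₖ₎ = Tr(X₁), where ‖·‖₍ₖ₎ is the Ky-Fan k-norm. -/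
open Matrix
open scoped ComplexOrder

/-! ### Auxiliary material -/

open Polynomial

section Charpoly

lemma charpoly_conj_unitary {n : ℕ} (U : Matrix.unitaryGroup (Fin n) ℂ)
    (D : Matrix (Fin n) (Fin n) ℂ) :
    ((U : Matrix (Fin n) (Fin n) ℂ) * D * star (U : Matrix (Fin n) (Fin n) ℂ)).charpoly
      = D.charpoly := by
  set P : Matrix (Fin n) (Fin n) (Polynomial ℂ) := (C : ℂ →+* Polynomial ℂ).mapMatrix U
  set Q : Matrix (Fin n) (Fin n) (Polynomial ℂ) :=
    (C : ℂ →+* Polynomial ℂ).mapMatrix (star (U : Matrix (Fin n) (Fin n) ℂ))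
  have hPQ : P * Q = 1 := by
    rw [show P * Q = (C : ℂ →+* Polynomial ℂ).mapMatrix
      ((U : Matrix (Fin n) (Fin n) ℂ) * star (U : Matrix (Fin n) (Fin n) ℂ)) from (map_mul _ _ _).symm,
      Matrix.mem_unitaryGroup_iff.mp U.2, _root_.map_one]
  have h1 : ((U : Matrix (Fin n) (Fin n) ℂ) * D * star (U : Matrix (Fin n) (Fin n) ℂ)).charmatrix
      = P * D.charmatrix * Q := by
    unfold Matrix.charmatrix
    rw [mul_sub, sub_mul, _root_.map_mul, _root_.map_mul]
    congr 1
    rw [(Matrix.scalar_commute (X : Polynomial ℂ) (fun r => Commute.all _ _) P).symm.eq,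
      mul_assoc, hPQ, mul_one]
  unfold Matrix.charpoly
  rw [h1, det_mul, det_mul, mul_comm P.det, mul_assoc, ← det_mul, hPQ, det_one, mul_one]

noncomputable def eigMul {n : ℕ} {A : Matrix (Fin n) (Fin n) ℂ} (hA : A.IsHermitian) :
    Multiset ℝ := Multiset.map hA.eigenvalues Finset.univ.val

lemma charpoly_diagonal {n : ℕ} (d : Fin n → ℂ) :
    (Matrix.diagonal d).charpoly = ∏ i, (X - C (d i)) := by
  unfold Matrix.charpoly Matrix.charmatrix
  have : Matrix.scalar (Fin n) (X : Polynomial ℂ) -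
      (C : ℂ →+* Polynomial ℂ).mapMatrix (Matrix.diagonal d)
      = Matrix.diagonal (fun i => X - C (d i)) := by
    ext i j
    by_cases h : i = j <;> simp [h, Matrix.diagonal, Matrix.sub_apply, Matrix.scalar_apply]
  rw [this, Matrix.det_diagonal]

lemma roots_charpoly {n : ℕ} {A : Matrix (Fin n) (Fin n) ℂ} (hA : A.IsHermitian) :
    A.charpoly.roots = (eigMul hA).map (fun r : ℝ => (r : ℂ)) := by
  have hsp := hA.spectral_theorem
  have hc : A.charpoly = (Matrix.diagonal (RCLike.ofReal ∘ hA.eigenvalues)).charpoly := by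
    conv_lhs => rw [hsp]
    exact charpoly_conj_unitary hA.eigenvectorUnitary _
  rw [hc, charpoly_diagonal]
  have : ∏ i, (X - C ((RCLike.ofReal ∘ hA.eigenvalues) i)) =
      (Multiset.map (fun a : ℂ => X - C a)
        ((eigMul hA).map (fun r : ℝ => (r : ℂ)))).prod := by
    rw [eigMul, Multiset.map_map, Multiset.map_map]
    rfl
  rw [this, Polynomial.roots_multiset_prod_X_sub_C]

lemma eigMul_eq_of {n : ℕ} {A : Matrix (Fin n) (Fin n) ℂ} (hA : A.IsHermitian)
    (M : Multiset ℝ) (h : A.charpoly.roots = M.map (fun r : ℝ => (r : ℂ))) :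
    eigMul hA = M := by
  apply Multiset.map_injective Complex.ofReal_injective
  rw [← roots_charpoly hA, h]

lemma eigMul_congr {n : ℕ} {A B : Matrix (Fin n) (Fin n) ℂ} (h : A = B)
    (hA : A.IsHermitian) (hB : B.IsHermitian) : eigMul hA = eigMul hB := by
  subst h; rfl

lemma bd_charpoly {k m : ℕ} (H₁ : Matrix (Fin k) (Fin k) ℂ) (H₂ : Matrix (Fin m) (Fin m) ℂ) :
    (bd H₁ H₂).charpoly = H₁.charpoly * H₂.charpoly := by
  rw [bd, Matrix.charpoly_reindex, Matrix.charpoly_fromBlocks_zero₁₂]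

lemma eigMul_bd {k m : ℕ} {H₁ : Matrix (Fin k) (Fin k) ℂ} {H₂ : Matrix (Fin m) (Fin m) ℂ}
    (hb : (bd H₁ H₂).IsHermitian) (h1 : H₁.IsHermitian) (h2 : H₂.IsHermitian) :
    eigMul hb = eigMul h1 + eigMul h2 := by
  apply eigMul_eq_of
  rw [bd_charpoly, Polynomial.roots_mul
      (mul_ne_zero (Matrix.charpoly_monic H₁).ne_zero (Matrix.charpoly_monic H₂).ne_zero),
    roots_charpoly h1, roots_charpoly h2, Multiset.map_add]

lemma eigMul_sq {n : ℕ} {A : Matrix (Fin n) (Fin n) ℂ} (hA : A.IsHermitian)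
    (hAA : (A * A).IsHermitian) :
    eigMul hAA = (eigMul hA).map (fun r => r ^ 2) := by
  apply eigMul_eq_of
  have hU := Matrix.mem_unitaryGroup_iff'.mp hA.eigenvectorUnitary.2
  have hsq : A * A = (hA.eigenvectorUnitary : Matrix (Fin n) (Fin n) ℂ) *
      Matrix.diagonal (fun i => ((hA.eigenvalues i : ℂ))^2) *
      star (hA.eigenvectorUnitary : Matrix (Fin n) (Fin n) ℂ) := by
    conv_lhs => rw [hA.spectral_theorem, Unitary.conjStarAlgAut_apply]
    rw [show ∀ (U D : Matrix (Fin n) (Fin n) ℂ), (U * D * star U) * (U * D * star U)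
        = U * (D * (star U * U) * D) * star U from fun U D => by
      simp only [Matrix.mul_assoc], hU, Matrix.mul_one]
    congr 2
    rw [Matrix.diagonal_mul_diagonal]
    funext i
    simp [sq]
  rw [hsq, charpoly_conj_unitary, _root_.charpoly_diagonal]
  have : ∏ i, (X - C (((hA.eigenvalues i : ℂ))^2)) =
      (Multiset.map (fun a : ℂ => X - C a)
        (((eigMul hA).map (fun r => r^2)).map (fun r : ℝ => (r : ℂ)))).prod := by
    rw [eigMul, Multiset.map_map, Multiset.map_map, Multiset.map_map]
    rw [Finset.prod_eq_multiset_prod]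
    congr 1
    apply Multiset.map_congr rfl
    intro x _
    simp [Function.comp]
  rw [this, Polynomial.roots_multiset_prod_X_sub_C]

end Charpoly

section Comb

lemma map_univ_comp_equiv {α β γ : Type*} [Fintype α] [Fintype β] [DecidableEq β]
    (e : α ≃ β) (f : β → γ) :
    Multiset.map (fun a => f (e a)) Finset.univ.val = Multiset.map f Finset.univ.val := by
  conv_rhs => rw [← Finset.map_univ_equiv e]
  rw [Finset.map_val, Multiset.map_map]
  rfl

lemma pointwise_le_of_multiset_le {n p : ℕ} {s : Fin n → ℝ} {t : Fin p → ℝ}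
    (hs : Antitone s) (ht : Antitone t)
    (hle : Multiset.map t Finset.univ.val ≤ Multiset.map s Finset.univ.val)
    (i : Fin p) (h : (i : ℕ) < n) : t i ≤ s ⟨i, h⟩ := by
  by_contra hc
  push_neg at hc
  classical
  have h1 : (i : ℕ) + 1 ≤ Multiset.countP (fun x => t i ≤ x) (Multiset.map t Finset.univ.val) := by
    rw [Multiset.countP_map]
    have hsub : Finset.Iic i ⊆ Finset.univ.filter (fun l => t i ≤ t l) := by
      intro l hl
      simp only [Finset.mem_Iic] at hl
      simp only [Finset.mem_filter, Finset.mem_univ, true_and]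
      exact ht hl
    have := Finset.card_le_card hsub
    rw [Fin.card_Iic] at this
    exact this
  have h2 : Multiset.countP (fun x => t i ≤ x) (Multiset.map s Finset.univ.val) ≤ (i : ℕ) := by
    rw [Multiset.countP_map]
    have hsub : Finset.univ.filter (fun j => t i ≤ s j) ⊆ Finset.Iio (⟨i, h⟩ : Fin n) := by
      intro j hj
      simp only [Finset.mem_filter, Finset.mem_univ, true_and] at hj
      simp only [Finset.mem_Iio]
      by_contra hcon
      push_neg at hcon
      exact absurd (le_trans hj (hs hcon)) (not_le.mpr hc)
    have := Finset.card_le_card hsub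
    rw [Fin.card_Iio] at this
    exact this
  have := le_trans h1 (le_trans (Multiset.countP_le_of_le _ hle) h2)
  omega

lemma antitone_eq_of_multiset_eq {n : ℕ} {s t : Fin n → ℝ}
    (hs : Antitone s) (ht : Antitone t)
    (heq : Multiset.map t Finset.univ.val = Multiset.map s Finset.univ.val) :
    t = s := by
  funext i
  have h1 := pointwise_le_of_multiset_le hs ht heq.le i i.isLt
  have h2 := pointwise_le_of_multiset_le ht hs heq.ge i i.isLt
  simp only [Fin.eta] at h1 h2
  exact le_antisymm h1 h2

lemma antitone_append {k m : ℕ} {a : Fin k → ℝ} {b : Fin m → ℝ}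
    (ha : Antitone a) (hb : Antitone b) (hba : ∀ i j, b j ≤ a i) :
    Antitone (Fin.append a b) := by
  intro i j hij
  induction i using Fin.addCases with
  | left i' =>
    induction j using Fin.addCases with
    | left j' =>
      rw [Fin.append_left, Fin.append_left]
      exact ha hij
    | right j' =>
      rw [Fin.append_left, Fin.append_right]
      exact hba i' j'
  | right i' =>
    induction j using Fin.addCases with
    | left j' =>
      exfalso
      have hj := j'.isLt
      simp only [Fin.le_def, Fin.coe_natAdd, Fin.coe_castAdd] at hij
      omega
    | right j' =>
      rw [Fin.append_right, Fin.append_right]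
      exact hb (by simp only [Fin.le_def, Fin.coe_natAdd] at hij ⊢; omega)

lemma map_append_univ {k m : ℕ} (a : Fin k → ℝ) (b : Fin m → ℝ) :
    Multiset.map (Fin.append a b) Finset.univ.val
      = Multiset.map a Finset.univ.val + Multiset.map b Finset.univ.val := by
  classical
  rw [← map_univ_comp_equiv finSumFinEquiv (Fin.append a b)]
  rw [← Finset.univ_disjSum_univ, Finset.val_disjSum, Multiset.disjSum, Multiset.map_add,
    Multiset.map_map, Multiset.map_map]
  congr 1 <;> apply Multiset.map_congr rfl <;> intro x _ <;> simp

lemma sum_filter_lt {k m : ℕ} (f : Fin (k + m) → ℝ) :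
    ∑ i ∈ Finset.univ.filter (fun i : Fin (k + m) => (i : ℕ) < k), f i
      = ∑ i : Fin k, f (Fin.castAdd m i) := by
  rw [Finset.sum_filter, Fin.sum_univ_add]
  have h2 : ∀ i : Fin m, (if ((Fin.natAdd k i : Fin (k+m)) : ℕ) < k then f (Fin.natAdd k i) else 0) = 0 := by
    intro i; simp
  simp only [h2, Finset.sum_const_zero, add_zero]
  apply Finset.sum_congr rfl
  intro i _
  simp [i.isLt]

end Comb

section SV

lemma sv_antitone {n : ℕ} (A : Matrix (Fin n) (Fin n) ℂ) : Antitone (sv A) := by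
  intro i j hij
  unfold sv
  apply Real.sqrt_le_sqrt
  exact Tuple.monotone_sort _ (Fin.rev_le_rev.mpr hij)

lemma sv_multiset {n : ℕ} (A : Matrix (Fin n) (Fin n) ℂ) :
    Multiset.map (sv A) Finset.univ.val
      = (eigMul (Matrix.isHermitian_conjTranspose_mul_self A)).map Real.sqrt := by
  unfold sv eigMul
  rw [Multiset.map_map]
  calc Multiset.map (fun i : Fin n => Real.sqrt
        (((Matrix.isHermitian_conjTranspose_mul_self A).eigenvalues ∘
          Tuple.sort ((Matrix.isHermitian_conjTranspose_mul_self A).eigenvalues)) i.rev)) Finset.univ.val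
      = Multiset.map (fun i : Fin n => (Real.sqrt ∘
          (Matrix.isHermitian_conjTranspose_mul_self A).eigenvalues)
            ((Fin.revPerm.trans
              (Tuple.sort ((Matrix.isHermitian_conjTranspose_mul_self A).eigenvalues))) i)) Finset.univ.val := by
        apply Multiset.map_congr rfl; intro x _; rfl
    _ = Multiset.map (Real.sqrt ∘ (Matrix.isHermitian_conjTranspose_mul_self A).eigenvalues)
          Finset.univ.val := map_univ_comp_equiv _ _
    _ = _ := (Multiset.map_map _ _ _).symm ▸ rfl

lemma bd_conjTranspose {k m : ℕ} (X₁ : Matrix (Fin k) (Fin k) ℂ) (X₂ : Matrix (Fin m) (Fin m) ℂ) :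
    (bd X₁ X₂)ᴴ = bd X₁ᴴ X₂ᴴ := by
  rw [bd, bd, Matrix.conjTranspose_reindex, Matrix.fromBlocks_conjTranspose]
  simp

lemma bd_mul {k m : ℕ} (A C : Matrix (Fin k) (Fin k) ℂ) (B D : Matrix (Fin m) (Fin m) ℂ) :
    bd A B * bd C D = bd (A * C) (B * D) := by
  rw [bd, bd, bd, Matrix.reindex_apply, Matrix.reindex_apply, Matrix.reindex_apply,
    Matrix.submatrix_mul_equiv, Matrix.fromBlocks_multiply]
  simp

lemma bd_inj {k m : ℕ} {A C : Matrix (Fin k) (Fin k) ℂ} {B D : Matrix (Fin m) (Fin m) ℂ}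
    (h : bd A B = bd C D) : A = C ∧ B = D := by
  rw [bd, bd] at h
  have h2 := (Matrix.reindex finSumFinEquiv finSumFinEquiv).injective h
  constructor
  · have := congrArg Matrix.toBlocks₁₁ h2
    simpa [Matrix.toBlocks_fromBlocks₁₁] using this
  · have := congrArg Matrix.toBlocks₂₂ h2
    simpa [Matrix.toBlocks_fromBlocks₂₂] using this

/-- multiset of singular values of a block diagonal matrix -/
lemma sv_multiset_bd {k m : ℕ} (X₁ : Matrix (Fin k) (Fin k) ℂ) (X₂ : Matrix (Fin m) (Fin m) ℂ) :
    Multiset.map (sv (bd X₁ X₂)) Finset.univ.val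
      = Multiset.map (sv X₁) Finset.univ.val + Multiset.map (sv X₂) Finset.univ.val := by
  rw [sv_multiset, sv_multiset, sv_multiset]
  have heq : (bd X₁ X₂)ᴴ * (bd X₁ X₂) = bd (X₁ᴴ * X₁) (X₂ᴴ * X₂) := by
    rw [bd_conjTranspose, bd_mul]
  have hb : (bd (X₁ᴴ * X₁) (X₂ᴴ * X₂)).IsHermitian := heq ▸ Matrix.isHermitian_conjTranspose_mul_self _
  rw [eigMul_congr heq (Matrix.isHermitian_conjTranspose_mul_self _) hb,
    eigMul_bd hb (Matrix.isHermitian_conjTranspose_mul_self X₁) (Matrix.isHermitian_conjTranspose_mul_self X₂),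
    Multiset.map_add]

/-- for a psd matrix, the multiset of singular values is the multiset of eigenvalues -/
lemma sv_multiset_psd {n : ℕ} {A : Matrix (Fin n) (Fin n) ℂ} (hA : A.PosSemidef) :
    Multiset.map (sv A) Finset.univ.val = eigMul hA.isHermitian := by
  rw [sv_multiset]
  have heq : Aᴴ * A = A * A := by rw [hA.isHermitian.eq]
  have hAA : (A * A).IsHermitian := heq ▸ Matrix.isHermitian_conjTranspose_mul_self A
  rw [eigMul_congr heq (Matrix.isHermitian_conjTranspose_mul_self A) hAA,
    eigMul_sq hA.isHermitian hAA, Multiset.map_map]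
  rw [show eigMul hA.isHermitian = Multiset.map hA.isHermitian.eigenvalues Finset.univ.val from rfl,
    Multiset.map_map]
  apply Multiset.map_congr rfl
  intro x _
  simp only [Function.comp_apply]
  exact Real.sqrt_sq (hA.eigenvalues_nonneg x)

/-- the trace of a psd matrix is the sum of its singular values -/
lemma trace_re_psd {n : ℕ} {A : Matrix (Fin n) (Fin n) ℂ} (hA : A.PosSemidef) :
    A.trace.re = (Multiset.map (sv A) Finset.univ.val).sum := by
  rw [sv_multiset_psd hA]
  have h1 : A.trace = ((eigMul hA.isHermitian).map (fun r : ℝ => (r : ℂ))).sum := by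
    rw [Matrix.trace_eq_sum_roots_charpoly, roots_charpoly hA.isHermitian]
  have h2 : ((eigMul hA.isHermitian).map (fun r : ℝ => (r : ℂ))).sum
      = (((eigMul hA.isHermitian).sum : ℝ) : ℂ) := by
    rw [show ((fun r : ℝ => (r : ℂ))) = ⇑Complex.ofRealHom from rfl]
    exact (map_multiset_sum Complex.ofRealHom _).symm
  rw [h1, h2, Complex.ofReal_re]

end SV

theorem stmt11 (k m : ℕ) (hk : 1 < k) (hm : 0 < m)
    (X₁ : Matrix (Fin k) (Fin k) ℂ) (X₂ : Matrix (Fin m) (Fin m) ℂ) :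
    bd X₁ X₂ ∈ CC k m ↔
      (X₁.PosSemidef ∧ kyFan k (bd X₁ X₂) = X₁.trace.re) := by
  classical
  have hk1 : k - 1 < k := Nat.sub_lt (by omega) one_pos
  have hsvN2 : svN X₂ 0 = sv X₂ ⟨0, hm⟩ := dif_pos hm
  have hsvN1 : svN X₁ (k - 1) = sv X₁ ⟨k - 1, hk1⟩ := dif_pos hk1
  set a : Fin k → ℝ := sv X₁ with ha_def
  set b : Fin m → ℝ := sv X₂ with hb_def
  set s : Fin (k + m) → ℝ := sv (bd X₁ X₂) with hs_def
  have hmult : Multiset.map s Finset.univ.val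
      = Multiset.map a Finset.univ.val + Multiset.map b Finset.univ.val := sv_multiset_bd X₁ X₂
  have has : Antitone a := sv_antitone X₁
  have hbs : Antitone b := sv_antitone X₂
  have hss : Antitone s := sv_antitone (bd X₁ X₂)
  constructor
  · rintro ⟨Y₁, Y₂, heq, hpsd, hle⟩
    obtain ⟨h1, h2⟩ := bd_inj heq
    subst h1; subst h2
    refine ⟨hpsd, ?_⟩
    rw [hsvN2, hsvN1] at hle
    have hba : ∀ i j, b j ≤ a i := by
      intro i j
      calc b j ≤ b ⟨0, hm⟩ := hbs (by simp [Fin.le_def])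
        _ ≤ a ⟨k - 1, hk1⟩ := hle
        _ ≤ a i := has (by simp [Fin.le_def]; omega)
    have hc : Antitone (Fin.append a b) := antitone_append has hbs hba
    have hseq : s = Fin.append a b := by
      apply antitone_eq_of_multiset_eq hc hss
      rw [hmult, map_append_univ]
    rw [kyFan, sum_filter_lt s]
    have : ∀ i : Fin k, s (Fin.castAdd m i) = a i := by
      intro i
      rw [hseq, Fin.append_left]
    rw [Finset.sum_congr rfl (fun i _ => this i)]
    rw [trace_re_psd hpsd, Finset.sum_eq_multiset_sum]
  · rintro ⟨hpsd, hky⟩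
    refine ⟨X₁, X₂, rfl, hpsd, ?_⟩
    rw [hsvN2, hsvN1]
    -- pointwise bound
    have hptle : ∀ i : Fin k, a i ≤ s (Fin.castAdd m i) := by
      intro i
      have h : (i : ℕ) < k + m := lt_of_lt_of_le i.isLt (Nat.le_add_right k m)
      have := pointwise_le_of_multiset_le hss has
        (hmult ▸ Multiset.le_add_right _ _) i h
      exact this
    -- the sum equality
    have hsum : ∑ i : Fin k, a i = ∑ i : Fin k, s (Fin.castAdd m i) := by
      have h1 : kyFan k (bd X₁ X₂) = ∑ i : Fin k, s (Fin.castAdd m i) := sum_filter_lt s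
      have h2 : X₁.trace.re = ∑ i : Fin k, a i := by
        rw [trace_re_psd hpsd, Finset.sum_eq_multiset_sum]
      rw [← h1, hky, h2]
    have hpt : ∀ i : Fin k, a i = s (Fin.castAdd m i) :=
      fun i => (Finset.sum_eq_sum_iff_of_le (fun i _ => hptle i)).mp hsum i (Finset.mem_univ i)
    -- countP argument
    by_contra hcon
    push_neg at hcon
    set P : ℝ → Prop := fun x => b ⟨0, hm⟩ ≤ x with hP
    have hcount : Multiset.countP P (Multiset.map s Finset.univ.val)
        = Multiset.countP P (Multiset.map a Finset.univ.val)
          + Multiset.countP P (Multiset.map b Finset.univ.val) := by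
      rw [hmult, Multiset.countP_add]
    have hnatAdd : ∀ j : Fin m, ¬ P (s (Fin.natAdd k j)) := by
      intro j
      have h1 : s (Fin.natAdd k j) ≤ s (Fin.castAdd m ⟨k - 1, hk1⟩) := by
        apply hss
        simp only [Fin.le_def, Fin.coe_natAdd, Fin.coe_castAdd]
        omega
      rw [← hpt ⟨k - 1, hk1⟩] at h1
      intro hPj
      exact absurd (le_trans hPj h1) (not_le.mpr hcon)
    have hcs : Multiset.countP P (Multiset.map s Finset.univ.val)
        = Multiset.countP P (Multiset.map a Finset.univ.val) := by
      rw [Multiset.countP_map, Multiset.countP_map]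
      rw [show (Finset.univ.val.filter (fun i => P (s i))) = ((Finset.univ.filter (fun i => P (s i))).val) from rfl]
      rw [show (Finset.univ.val.filter (fun i => P (a i))) = ((Finset.univ.filter (fun i => P (a i))).val) from rfl]
      rw [← Finset.card_def, ← Finset.card_def, Finset.card_filter, Finset.card_filter,
        Fin.sum_univ_add]
      have hz : ∀ j : Fin m, (if P (s (Fin.natAdd k j)) then 1 else 0) = 0 := by
        intro j; simp [hnatAdd j]
      simp only [hz, Finset.sum_const_zero, add_zero]
      apply Finset.sum_congr rfl
      intro i _
      rw [hpt i]
    have hb0 : 0 < Multiset.countP P (Multiset.map b Finset.univ.val) := by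
      rw [Multiset.countP_pos]
      exact ⟨b ⟨0, hm⟩, Multiset.mem_map_of_mem _ (Finset.mem_univ_val _), le_refl _⟩
    omega
end
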